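/- arXiv:1408.0197 — 7 statements merged into one kernel-verified Lean document; each statement's English description precedes it below -/
import Mathlib

section
/- Let H be a complex Hilbert space, A : D(A) ⊆ H → H a densely defined closed linear operator, and L : ℝ → L(H) a norm-continuous family of bounded operators. Define the operator T on L²(ℝ;H) by (Tf)(t) = L(t)f(t) + A f(t) with maximal domain D(T) = {f ∈ L²(ℝ;H) : f(t) ∈ D(A) for a.e. t ∈ ℝ and (t ↦ L(t)f(t) + A f(t)) ∈ L²(ℝ;H)}. Then T is closed: whenever f_n ∈ D(T), f_n → f in L²(ℝ;H) and T f_n → g in L²(ℝ;H), one has f ∈ D(T) and T f = g. -/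
open MeasureTheory Filter Topology

/-!
Convergence in `L²` implies convergence in measure, so a common subsequence of `fₙ` and `T fₙ`
converges pointwise almost everywhere. At such a point `t`, `L(t)` is continuous, hence
`A fₙ(t) → g(t) - L(t) f(t)`, and the closedness of `A` places `f(t)` in `D(A)` with
`A f(t) = g(t) - L(t) f(t)`.
-/

theorem MeasureTheory.TendstoInMeasure.exists_seq_tendsto_ae_and
    {α E F : Type*} {m : MeasurableSpace α} {μ : Measure α}
    [PseudoEMetricSpace E] [PseudoEMetricSpace F]
    {f : ℕ → α → E} {g : α → E} {f' : ℕ → α → F} {g' : α → F}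
    (hf : TendstoInMeasure μ f atTop g) (hf' : TendstoInMeasure μ f' atTop g') :
    ∃ ns : ℕ → ℕ, StrictMono ns ∧ ∀ᵐ x ∂μ,
      Tendsto (fun i => f (ns i) x) atTop (𝓝 (g x)) ∧
        Tendsto (fun i => f' (ns i) x) atTop (𝓝 (g' x)) := by
  obtain ⟨ns, hns, hae⟩ := hf.exists_seq_tendsto_ae
  obtain ⟨ms, hms, hae'⟩ := (hf'.comp hns.tendsto_atTop).exists_seq_tendsto_ae
  refine ⟨ns ∘ ms, hns.comp hms, ?_⟩
  filter_upwards [hae, hae'] with x hx hx'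
  exact ⟨hx.comp hms.tendsto_atTop, hx'⟩

namespace LinearPMap

variable {R E F ι : Type*} [CommRing R] [AddCommGroup E] [Module R E] [AddCommGroup F] [Module R F]
  [TopologicalSpace E] [TopologicalSpace F] {A : E →ₗ.[R] F} {l : Filter ι} [l.NeBot]
  {x : ι → E} {y : ι → F} {x₀ : E}

theorem IsClosed.exists_apply_eq_of_tendsto (hA : A.IsClosed) {y₀ : F}
    (hxy : ∀ᶠ i in l, ∃ h : x i ∈ A.domain, A ⟨x i, h⟩ = y i)
    (hx : Tendsto x l (𝓝 x₀)) (hy : Tendsto y l (𝓝 y₀)) :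
    ∃ h : x₀ ∈ A.domain, A ⟨x₀, h⟩ = y₀ := by
  have hgraph : (x₀, y₀) ∈ A.graph :=
    _root_.IsClosed.mem_of_tendsto hA (hx.prodMk_nhds hy)
      (hxy.mono fun i ⟨h, hi⟩ => hi ▸ A.mem_graph ⟨x i, h⟩)
  have hdom := mem_domain_of_mem_graph hgraph
  exact ⟨hdom, ((image_iff hdom).2 hgraph).symm⟩

theorem IsClosed.exists_add_apply_eq_of_tendsto [IsTopologicalAddGroup F] (hA : A.IsClosed)
    {B : E → F} (hB : Continuous B) {z : F}
    (hxy : ∀ᶠ i in l, ∃ h : x i ∈ A.domain, A ⟨x i, h⟩ = y i)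
    (hx : Tendsto x l (𝓝 x₀)) (hy : Tendsto (fun i => B (x i) + y i) l (𝓝 z)) :
    ∃ h : x₀ ∈ A.domain, B x₀ + A ⟨x₀, h⟩ = z := by
  have hAx : Tendsto y l (𝓝 (z - B x₀)) := by
    simpa using hy.sub ((hB.tendsto x₀).comp hx)
  obtain ⟨h, hAx₀⟩ := hA.exists_apply_eq_of_tendsto hxy hx hAx
  exact ⟨h, by rw [hAx₀, add_sub_cancel]⟩

end LinearPMap

theorem stmt_0_general
    {H : Type*} [NormedAddCommGroup H] [InnerProductSpace ℂ H]
    (A : H →ₗ.[ℂ] H)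
    (hclosed : IsClosed (A.graph : Set (H × H)))
    (L : ℝ → H →L[ℂ] H)
    (f Af : ℕ → ℝ → H) (flim g : ℝ → H)
    (hf2 : ∀ n, MemLp (f n) 2 (volume : Measure ℝ))
    (hfD : ∀ n, ∀ᵐ t : ℝ, ∃ h : f n t ∈ A.domain, A ⟨f n t, h⟩ = Af n t)
    (hTf2 : ∀ n, MemLp (fun t => L t (f n t) + Af n t) 2 (volume : Measure ℝ))
    (hflim : MemLp flim 2 (volume : Measure ℝ))
    (hg : MemLp g 2 (volume : Measure ℝ))
    (hconv : Tendsto (fun n => eLpNorm (f n - flim) 2 volume) atTop (𝓝 0))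
    (hTconv : Tendsto (fun n =>
        eLpNorm ((fun t => L t (f n t) + Af n t) - g) 2 volume) atTop (𝓝 0)) :
    ∀ᵐ t : ℝ, ∃ h : flim t ∈ A.domain, L t (flim t) + A ⟨flim t, h⟩ = g t := by
  have hf_meas := tendstoInMeasure_of_tendsto_eLpNorm two_ne_zero
    (fun n => (hf2 n).aestronglyMeasurable) hflim.aestronglyMeasurable hconv
  have hTf_meas := tendstoInMeasure_of_tendsto_eLpNorm two_ne_zero
    (fun n => (hTf2 n).aestronglyMeasurable) hg.aestronglyMeasurable hTconv
  obtain ⟨ns, -, hae⟩ := hf_meas.exists_seq_tendsto_ae_and hTf_meas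
  filter_upwards [hae, ae_all_iff.2 hfD] with t ⟨hft, hTft⟩ hD
  exact LinearPMap.IsClosed.exists_add_apply_eq_of_tendsto hclosed (L t).continuous
    (Eventually.of_forall fun k => hD (ns k)) hft hTft

/-- first part of Lemma 2.1 of the paper.
Let `H` be a complex Hilbert space, `A` a densely defined closed linear operator on `H`
(modelled as a partially defined linear map with dense domain and closed graph), and
`L : ℝ → L(H)` a norm-continuous family of bounded operators.  The operator `T` on
`L²(ℝ;H)` given by `(Tf)(t) = L(t) f(t) + A f(t)` on its maximal domain is closed:
if `fₙ ∈ D(T)`, `fₙ → f` in `L²` and `T fₙ → g` in `L²`, then `f ∈ D(T)` and `T f = g`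
(i.e. a.e. `f(t) ∈ D(A)` and `L(t) f(t) + A f(t) = g(t)`).
Here `Af n` is the pointwise a.e. value of `A` applied to `f n`. -/
theorem stmt_0
    {H : Type*} [NormedAddCommGroup H] [InnerProductSpace ℂ H] [CompleteSpace H]
    (A : H →ₗ.[ℂ] H)
    (hdense : Dense (A.domain : Set H))
    (hclosed : IsClosed (A.graph : Set (H × H)))
    (L : ℝ → H →L[ℂ] H) (hL : Continuous L)
    (f Af : ℕ → ℝ → H) (flim g : ℝ → H)
    (hf2 : ∀ n, MemLp (f n) 2 (volume : Measure ℝ))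
    (hfD : ∀ n, ∀ᵐ t : ℝ, ∃ h : f n t ∈ A.domain, A ⟨f n t, h⟩ = Af n t)
    (hTf2 : ∀ n, MemLp (fun t => L t (f n t) + Af n t) 2 (volume : Measure ℝ))
    (hflim : MemLp flim 2 (volume : Measure ℝ))
    (hg : MemLp g 2 (volume : Measure ℝ))
    (hconv : Tendsto (fun n => eLpNorm (f n - flim) 2 volume) atTop (𝓝 0))
    (hTconv : Tendsto (fun n =>
        eLpNorm ((fun t => L t (f n t) + Af n t) - g) 2 volume) atTop (𝓝 0)) :
    ∀ᵐ t : ℝ, ∃ h : flim t ∈ A.domain, L t (flim t) + A ⟨flim t, h⟩ = g t :=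
  stmt_0_general A hclosed L f Af flim g hf2 hfD hTf2 hflim hg hconv hTconv
end

section
/- Let H be a complex Hilbert space and A : D(A) ⊆ H → H a densely defined closed linear operator which is accretive (Re⟨Ax|x⟩ ≥ 0 for all x ∈ D(A)), m-accretive (the operator x ↦ x + Ax maps D(A) onto H), and boundedly invertible: there is G ∈ L(H) with G(Ax) = x for x ∈ D(A) and AGy = y for y ∈ H; write C_A := ‖G‖. Let r > 0, let M : {w ∈ ℂ : |w + r| > r} → L(H) be analytic, let δ ∈ [0, 1/(2r)), and suppose K := sup{‖zM(z^{-1})‖ : z ∈ ℂ, 0 < |z| ≤ δ, Re z > −1/(2r)} satisfies K·C_A < 1, and that there are c > 0 and ρ₀ ∈ (0, 1/(2r)) such that Re⟨zM(z^{-1})x|x⟩ ≥ c‖x‖² for all x ∈ H and all z ∈ ℂ with Re z > −ρ₀ and |z| > δ. Then for every z ∈ ℂ with Re z > −ρ₀ and z ≠ 0, the operator D(A) ∋ x ↦ zM(z^{-1})x + Ax is a bijection onto H whose inverse is bounded with norm at most max{1/c, C_A/(1 − K·C_A)}. -/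
/-- `S` is a bounded two-sided inverse of the (generally unbounded) operator
`x ↦ B x + A x` defined on `D(A)`; in particular `x ↦ B x + A x : D(A) → H` is a
bijection onto `H` with bounded inverse `S`. -/
def IsBddInvPair {H : Type*} [NormedAddCommGroup H] [InnerProductSpace ℂ H]
    (A : H →ₗ.[ℂ] H) (B S : H →L[ℂ] H) : Prop :=
  (∀ x : A.domain, S (B x + A x) = x) ∧
    ∀ y : H, ∃ h : S y ∈ A.domain, B (S y) + A ⟨S y, h⟩ = y

/-!
For `‖z‖ > δ` the operator `B = z M(z⁻¹)` is coercive with constant `c` and `A` is accretive, so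
`‖x‖ ≤ c⁻¹ ‖(B + A) x‖`; surjectivity of `B + A` follows by the method of continuity along the
segment from `1 + A` (onto by m-accretivity) to `B + A`, each short step being a Neumann-series
perturbation of an operator with bounded inverse. For `‖z‖ ≤ δ`, `B + A` is itself such a
perturbation of `A`, since `‖B‖ ‖G‖ ≤ K ‖G‖ < 1`, and its inverse has norm at most
`‖G‖ / (1 - K ‖G‖)`.
-/

namespace LinearPMap

open Function RCLike
open scoped InnerProductSpace

section BoundedBelow

variable {𝕜 E F : Type*} [NontriviallyNormedField 𝕜] [NormedAddCommGroup E] [NormedSpace 𝕜 E]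
  [NormedAddCommGroup F] [NormedSpace 𝕜 F]

theorem exists_bounded_inverse_of_surjective (T : E →ₗ.[𝕜] F) {C : ℝ} (hC : 0 ≤ C)
    (hbound : ∀ x : T.domain, ‖(x : E)‖ ≤ C * ‖T x‖) (hsurj : Surjective T) :
    ∃ S : F →L[𝕜] E, (∀ x : T.domain, S (T x) = x) ∧
      (∀ y, ∃ h : S y ∈ T.domain, T ⟨S y, h⟩ = y) ∧ ‖S‖ ≤ C := by
  have hinj : Injective T.toFun := by
    refine (injective_iff_map_eq_zero _).2 fun x hx => Subtype.ext <| norm_le_zero_iff.1 ?_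
    simpa [show T x = 0 from hx] using hbound x
  let e := LinearEquiv.ofBijective T.toFun ⟨hinj, hsurj⟩
  have hS : ∀ y, ‖(T.domain.subtype ∘ₗ e.symm.toLinearMap) y‖ ≤ C * ‖y‖ := fun y => by
    have h := hbound (e.symm y)
    rw [show T (e.symm y) = y from e.apply_symm_apply y] at h
    exact h
  refine ⟨_, fun x => ?_, fun y => ⟨(e.symm y).2, ?_⟩, LinearMap.mkContinuous_norm_le _ hC hS⟩
  · exact congrArg Subtype.val (e.symm_apply_apply x)
  · exact e.apply_symm_apply y

theorem norm_le_mul_norm_vadd (T : E →ₗ.[𝕜] F) {C : ℝ} (hC : 0 ≤ C)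
    (hbound : ∀ x : T.domain, ‖(x : E)‖ ≤ C * ‖T x‖) (P : E →L[𝕜] F) (hP : C * ‖P‖ < 1)
    (x : T.domain) : ‖(x : E)‖ ≤ C / (1 - C * ‖P‖) * ‖((P : E →ₗ[𝕜] F) +ᵥ T) x‖ := by
  rw [div_mul_eq_mul_div, le_div_iff₀ (sub_pos.2 hP)]
  have hT : ‖T x‖ ≤ ‖((P : E →ₗ[𝕜] F) +ᵥ T) x‖ + ‖P‖ * ‖(x : E)‖ := by
    calc ‖T x‖ = ‖((P : E →ₗ[𝕜] F) +ᵥ T) x - P x‖ := by simp [vadd_apply]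
      _ ≤ _ := (norm_sub_le _ _).trans (by gcongr; exact P.le_opNorm _)
  nlinarith [hbound x, mul_le_mul_of_nonneg_left hT hC]

theorem surjective_vadd_of_norm_mul_lt_one [CompleteSpace F] (T : E →ₗ.[𝕜] F) {C : ℝ}
    (hC : 0 ≤ C) (hbound : ∀ x : T.domain, ‖(x : E)‖ ≤ C * ‖T x‖) (hsurj : Surjective T)
    (P : E →L[𝕜] F) (hP : C * ‖P‖ < 1) : Surjective ((P : E →ₗ[𝕜] F) +ᵥ T) := by
  obtain ⟨S, -, hTS, hS⟩ := T.exists_bounded_inverse_of_surjective hC hbound hsurj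
  -- `(P + T) ∘ S = 1 + P ∘ S`, which is invertible by a Neumann series.
  have hsmall : ‖-(P ∘L S)‖ < 1 := by
    calc ‖-(P ∘L S)‖ ≤ ‖P‖ * ‖S‖ := (norm_neg _).trans_le (P.opNorm_comp_le S)
      _ ≤ C * ‖P‖ := by rw [mul_comm]; exact mul_le_mul_of_nonneg_right hS (norm_nonneg P)
      _ < 1 := hP
  obtain ⟨u, hu⟩ := isUnit_one_sub_of_norm_lt_one hsmall
  intro y
  set w := (↑u⁻¹ : F →L[𝕜] F) y
  obtain ⟨h, hw⟩ := hTS w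
  refine ⟨⟨S w, h⟩, ?_⟩
  calc ((P : E →ₗ[𝕜] F) +ᵥ T) ⟨S w, h⟩ = (1 - -(P ∘L S)) w := by
        simp [vadd_apply, hw, add_comm]
    _ = ((u : F →L[𝕜] F) * ↑u⁻¹) y := by rw [hu]; rfl
    _ = y := by rw [u.mul_inv]; rfl

end BoundedBelow

section Coercive

variable {𝕜 E : Type*} [RCLike 𝕜] [NormedAddCommGroup E] [InnerProductSpace 𝕜 E]

theorem norm_le_inv_mul_norm_of_coercive (T : E →ₗ.[𝕜] E) {γ : ℝ} (hγ : 0 < γ)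
    (hT : ∀ x : T.domain, γ * ‖(x : E)‖ ^ 2 ≤ re ⟪T x, (x : E)⟫_𝕜) (x : T.domain) :
    ‖(x : E)‖ ≤ γ⁻¹ * ‖T x‖ := by
  rw [inv_mul_eq_div, le_div_iff₀ hγ]
  nlinarith [hT x, re_inner_le_norm (𝕜 := 𝕜) (T x) (x : E), norm_nonneg (x : E),
    norm_nonneg (T x)]

theorem surjective_vadd_of_coercive_segment [CompleteSpace E] (A : E →ₗ.[𝕜] E)
    (B₀ B₁ : E →L[𝕜] E) {γ : ℝ} (hγ : 0 < γ)
    (h₀ : ∀ x : A.domain, γ * ‖(x : E)‖ ^ 2 ≤ re ⟪B₀ x + A x, (x : E)⟫_𝕜)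
    (h₁ : ∀ x : A.domain, γ * ‖(x : E)‖ ^ 2 ≤ re ⟪B₁ x + A x, (x : E)⟫_𝕜)
    (hsurj : Surjective ((B₀ : E →ₗ[𝕜] E) +ᵥ A)) : Surjective ((B₁ : E →ₗ[𝕜] E) +ᵥ A) := by
  obtain ⟨B, hB_def⟩ : ∃ B : ℝ → E →L[𝕜] E, ∀ t, B t = B₀ + (t : 𝕜) • (B₁ - B₀) :=
    ⟨_, fun _ => rfl⟩
  have hB : ∀ t ∈ Set.Icc (0 : ℝ) 1, ∀ x : ((B t : E →ₗ[𝕜] E) +ᵥ A).domain,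
      γ * ‖(x : E)‖ ^ 2 ≤ re ⟪((B t : E →ₗ[𝕜] E) +ᵥ A) x, (x : E)⟫_𝕜 := by
    rintro t ⟨ht₀, ht₁⟩ x
    have hconvex : re ⟪((B t : E →ₗ[𝕜] E) +ᵥ A) x, (x : E)⟫_𝕜 =
        (1 - t) * re ⟪B₀ x + A x, (x : E)⟫_𝕜 + t * re ⟪B₁ x + A x, (x : E)⟫_𝕜 := by
      simp only [vadd_apply, hB_def, ContinuousLinearMap.toLinearMap_add,
        ContinuousLinearMap.toLinearMap_smul, ContinuousLinearMap.toLinearMap_sub, vadd_domain,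
        LinearMap.add_apply, ContinuousLinearMap.coe_coe, LinearMap.smul_apply, LinearMap.sub_apply,
        inner_add_left, inner_smul_left, conj_ofReal, inner_sub_left, _root_.map_add, mul_re,
        ofReal_re, _root_.map_sub, ofReal_im, zero_mul, sub_zero]
      ring
    nlinarith [h₀ x, h₁ x]
  obtain ⟨N, hN⟩ := exists_nat_gt (‖B₁ - B₀‖ / γ)
  have hN₀ : (0 : ℝ) < N := (div_nonneg (norm_nonneg _) hγ.le).trans_lt hN
  have hstep : ∀ k < N, Surjective ((B (k / N) : E →ₗ[𝕜] E) +ᵥ A) →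
      Surjective ((B ((k + 1 : ℕ) / N) : E →ₗ[𝕜] E) +ᵥ A) := by
    intro k hk hsurj_k
    have hkN : (k / N : ℝ) ∈ Set.Icc (0 : ℝ) 1 :=
      ⟨by positivity, div_le_one_of_le₀ (by exact_mod_cast hk.le) hN₀.le⟩
    have hnext : B ((k + 1 : ℕ) / N) = (N : 𝕜)⁻¹ • (B₁ - B₀) + B (k / N) := by
      rw [hB_def, hB_def]
      push_cast
      module
    rw [hnext, ContinuousLinearMap.toLinearMap_add, add_vadd]
    refine surjective_vadd_of_norm_mul_lt_one ((B (k / N) : E →ₗ[𝕜] E) +ᵥ A)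
      (inv_nonneg.2 hγ.le) (norm_le_inv_mul_norm_of_coercive _ hγ (hB _ hkN)) hsurj_k _ ?_
    rw [norm_smul, norm_inv, RCLike.norm_natCast, mul_left_comm, inv_mul_lt_one₀ hN₀,
      ← div_eq_inv_mul]
    exact hN
  have hsurj_le : ∀ k ≤ N, Surjective ((B (k / N) : E →ₗ[𝕜] E) +ᵥ A) := by
    intro k
    induction k with
    | zero => intro _; simpa [hB_def] using hsurj
    | succ k ih => intro hk; exact hstep k hk (ih (Nat.le_of_succ_le hk))
  simpa [hB_def, div_self hN₀.ne'] using hsurj_le N le_rfl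

end Coercive

end LinearPMap

theorem IsBddInvPair.exists_of_surjective {H : Type*} [NormedAddCommGroup H]
    [InnerProductSpace ℂ H] (A : H →ₗ.[ℂ] H) (B : H →L[ℂ] H) {C : ℝ} (hC : 0 ≤ C)
    (hbound : ∀ x : A.domain, ‖(x : H)‖ ≤ C * ‖((B : H →ₗ[ℂ] H) +ᵥ A) x‖)
    (hsurj : Function.Surjective ((B : H →ₗ[ℂ] H) +ᵥ A)) :
    ∃ S : H →L[ℂ] H, IsBddInvPair A B S ∧ ‖S‖ ≤ C :=
  let ⟨S, hST, hTS, hS⟩ := LinearPMap.exists_bounded_inverse_of_surjective _ hC hbound hsurj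
  ⟨S, ⟨hST, hTS⟩, hS⟩

namespace IsBddInvPair

variable {H : Type*} [NormedAddCommGroup H] [InnerProductSpace ℂ H] [CompleteSpace H]
  (A : H →ₗ.[ℂ] H) (B : H →L[ℂ] H)

theorem exists_of_coercive (haccr : ∀ x : A.domain, 0 ≤ (inner ℂ (A x) (x : H)).re)
    (hmaccr : ∀ y : H, ∃ x : A.domain, (x : H) + A x = y) {c : ℝ} (hc : 0 < c)
    (hB : ∀ x : H, c * ‖x‖ ^ 2 ≤ (inner ℂ (B x) x).re) :
    ∃ S : H →L[ℂ] H, IsBddInvPair A B S ∧ ‖S‖ ≤ c⁻¹ := by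
  have hcoer : ∀ x : A.domain, c * ‖(x : H)‖ ^ 2 ≤ (inner ℂ (B x + A x) (x : H)).re := fun x => by
    rw [inner_add_left, Complex.add_re]
    linarith [hB x, haccr x]
  have hcoer_one : ∀ x : A.domain,
      min 1 c * ‖(x : H)‖ ^ 2 ≤ (inner ℂ ((1 : H →L[ℂ] H) x + A x) (x : H)).re := fun x => by
    have hx : (inner ℂ (x : H) (x : H)).re = ‖(x : H)‖ ^ 2 :=
      inner_self_eq_norm_sq (𝕜 := ℂ) (x : H)
    rw [one_apply_eq_self, inner_add_left, Complex.add_re, hx]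
    nlinarith [min_le_left 1 c, haccr x, sq_nonneg ‖(x : H)‖]
  refine exists_of_surjective A B (inv_nonneg.2 hc.le)
    (((B : H →ₗ[ℂ] H) +ᵥ A).norm_le_inv_mul_norm_of_coercive hc hcoer)
    (A.surjective_vadd_of_coercive_segment 1 B (lt_min one_pos hc) hcoer_one (fun x => ?_) hmaccr)
  exact (mul_le_mul_of_nonneg_right (min_le_right 1 c) (by positivity)).trans (hcoer x)

theorem exists_of_norm_mul_lt_one (G : H →L[ℂ] H) (hGA : ∀ x : A.domain, G (A x) = x)
    (hAG : ∀ y : H, ∃ h : G y ∈ A.domain, A ⟨G y, h⟩ = y) (hGB : ‖G‖ * ‖B‖ < 1) :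
    ∃ S : H →L[ℂ] H, IsBddInvPair A B S ∧ ‖S‖ ≤ ‖G‖ / (1 - ‖G‖ * ‖B‖) := by
  have hA_bound : ∀ x : A.domain, ‖(x : H)‖ ≤ ‖G‖ * ‖A x‖ := fun x => by
    simpa only [hGA] using G.le_opNorm (A x)
  have hA_surj : Function.Surjective A := fun y =>
    let ⟨h, hy⟩ := hAG y
    ⟨⟨G y, h⟩, hy⟩
  exact exists_of_surjective A B (div_nonneg (norm_nonneg G) (sub_pos.2 hGB).le)
    (A.norm_le_mul_norm_vadd (norm_nonneg G) hA_bound B hGB)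
    (A.surjective_vadd_of_norm_mul_lt_one (norm_nonneg G) hA_bound hA_surj B hGB)

end IsBddInvPair

theorem stmt_6_general
    {H : Type*} [NormedAddCommGroup H] [InnerProductSpace ℂ H] [CompleteSpace H]
    (A : H →ₗ.[ℂ] H)
    -- `A` is accretive
    (haccr : ∀ x : A.domain, 0 ≤ (inner ℂ (A x) (x : H) : ℂ).re)
    -- `A` is m-accretive: `1 + A` is onto
    (hmaccr : ∀ y : H, ∃ x : A.domain, (x : H) + A x = y)
    -- `A` is boundedly invertible with inverse `G`
    (G : H →L[ℂ] H)
    (hGA : ∀ x : A.domain, G (A x) = x)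
    (hAG : ∀ y : H, ∃ h : G y ∈ A.domain, A ⟨G y, h⟩ = y)
    (r : ℝ)
    (M : ℂ → H →L[ℂ] H)
    (δ : ℝ)
    (K : ℝ)
    (hK : ∀ z : ℂ, z ≠ 0 → ‖z‖ ≤ δ → -(1 / (2 * r)) < z.re →
      ‖z • M z⁻¹‖ ≤ K)
    (hKG : K * ‖G‖ < 1)
    (c ρ₀ : ℝ) (hc : 0 < c) (hρ₀r : ρ₀ < 1 / (2 * r))
    (hpos : ∀ z : ℂ, -ρ₀ < z.re → δ < ‖z‖ →
      ∀ x : H, c * ‖x‖ ^ 2 ≤ (inner ℂ ((z • M z⁻¹) x) x : ℂ).re) :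
    ∀ z : ℂ, z ≠ 0 → -ρ₀ < z.re →
      ∃ S : H →L[ℂ] H, IsBddInvPair A (z • M z⁻¹) S ∧
        ‖S‖ ≤ max (1 / c) (‖G‖ / (1 - K * ‖G‖)) := by
  intro z hz hz_re
  rcases lt_or_ge δ ‖z‖ with hδz | hzδ
  · obtain ⟨S, hS, hS_norm⟩ :=
      IsBddInvPair.exists_of_coercive A _ haccr hmaccr hc (hpos z hz_re hδz)
    exact ⟨S, hS, hS_norm.trans (one_div c ▸ le_max_left _ _)⟩
  · have hBK : ‖z • M z⁻¹‖ ≤ K := hK z hz hzδ (by linarith)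
    have hGB : ‖G‖ * ‖z • M z⁻¹‖ < 1 := by nlinarith [norm_nonneg G]
    obtain ⟨S, hS, hS_norm⟩ := IsBddInvPair.exists_of_norm_mul_lt_one A _ G hGA hAG hGB
    refine ⟨S, hS, hS_norm.trans (le_max_of_le_right ?_)⟩
    exact div_le_div_of_nonneg_left (norm_nonneg G) (by linarith) (by nlinarith [norm_nonneg G])

/-- frequency-domain content of Proposition 3.1 of the paper.
Let `A` be densely defined, closed, accretive, m-accretive and boundedly invertible
with bounded inverse `G` (so `C_A = ‖G‖`).  Let `M` be analytic on
`{w : |w + r| > r}`, let `δ ∈ [0, 1/(2r))`, `K` a bound for `‖z M(z⁻¹)‖` on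
`{0 < |z| ≤ δ, Re z > −1/(2r)}` with `K‖G‖ < 1`, and assume
`Re⟨zM(z⁻¹)x|x⟩ ≥ c‖x‖²` for `Re z > −ρ₀`, `|z| > δ`.  Then for every `z ≠ 0` with
`Re z > −ρ₀` the operator `zM(z⁻¹) + A` is a bijection of `D(A)` onto `H` with
bounded inverse of norm at most `max (1/c) (‖G‖/(1 − K‖G‖))`. -/
theorem stmt_6
    {H : Type*} [NormedAddCommGroup H] [InnerProductSpace ℂ H] [CompleteSpace H]
    (A : H →ₗ.[ℂ] H)
    (hdense : Dense (A.domain : Set H))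
    (hclosed : IsClosed (A.graph : Set (H × H)))
    -- `A` is accretive
    (haccr : ∀ x : A.domain, 0 ≤ (inner ℂ (A x) (x : H) : ℂ).re)
    -- `A` is m-accretive: `1 + A` is onto
    (hmaccr : ∀ y : H, ∃ x : A.domain, (x : H) + A x = y)
    -- `A` is boundedly invertible with inverse `G`
    (G : H →L[ℂ] H)
    (hGA : ∀ x : A.domain, G (A x) = x)
    (hAG : ∀ y : H, ∃ h : G y ∈ A.domain, A ⟨G y, h⟩ = y)
    (r : ℝ) (hr : 0 < r)
    (M : ℂ → H →L[ℂ] H)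
    (hM : DifferentiableOn ℂ M {w : ℂ | r < ‖w + (r : ℂ)‖})
    (δ : ℝ) (hδ0 : 0 ≤ δ) (hδr : δ < 1 / (2 * r))
    (K : ℝ)
    (hK : ∀ z : ℂ, z ≠ 0 → ‖z‖ ≤ δ → -(1 / (2 * r)) < z.re →
      ‖z • M z⁻¹‖ ≤ K)
    (hKG : K * ‖G‖ < 1)
    (c ρ₀ : ℝ) (hc : 0 < c) (hρ₀ : 0 < ρ₀) (hρ₀r : ρ₀ < 1 / (2 * r))
    (hpos : ∀ z : ℂ, -ρ₀ < z.re → δ < ‖z‖ →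
      ∀ x : H, c * ‖x‖ ^ 2 ≤ (inner ℂ ((z • M z⁻¹) x) x : ℂ).re) :
    ∀ z : ℂ, z ≠ 0 → -ρ₀ < z.re →
      ∃ S : H →L[ℂ] H, IsBddInvPair A (z • M z⁻¹) S ∧
        ‖S‖ ≤ max (1 / c) (‖G‖ / (1 - K * ‖G‖)) :=
  stmt_6_general A haccr hmaccr G hGA hAG r M δ K hK hKG c ρ₀ hc hρ₀r hpos
end

section
/- Let H be a complex Hilbert space, M₀ ∈ L(H) selfadjoint with ⟨M₀x|x⟩ ≥ 0 for all x, M₁ ∈ L(H) with Re⟨M₁x|x⟩ ≥ c‖x‖² for all x, where c > 0, and let r > 0. Then for every z ∈ ℂ with |z + r| > r (equivalently z ≠ 0 and Re(z^{-1}) > −1/(2r)) and every x ∈ H: Re⟨z^{-1}(M₀ x + z M₁ x)|x⟩ ≥ (c − ‖M₀‖/(2r))‖x‖². In particular, if r > ‖M₀‖/(2c) this lower bound is strictly positive. -/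
/-!
The disc condition `|z + r| > r` says `|z|² + 2r Re z > 0`, i.e. `Re z⁻¹ = Re z / |z|² > -1/(2r)`.
Since `M₀` is selfadjoint, `⟨M₀x|x⟩` is real, so
`Re⟨z⁻¹(M₀x + zM₁x)|x⟩ = Re z⁻¹ ⟨M₀x|x⟩ + Re⟨M₁x|x⟩`, and `0 ≤ ⟨M₀x|x⟩ ≤ ‖M₀‖‖x‖²`
bounds the first term below by `-‖M₀‖‖x‖²/(2r)`.
-/

open ComplexConjugate

theorem Complex.ne_zero_of_lt_norm_add_ofReal {r : ℝ} (hr : 0 < r) {z : ℂ} (hz : r < ‖z + r‖) :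
    z ≠ 0 := by
  rintro rfl
  simp [abs_of_pos hr] at hz

theorem Complex.neg_inv_two_mul_lt_re_inv {r : ℝ} (hr : 0 < r) {z : ℂ} (hz : r < ‖z + r‖) :
    -(2 * r)⁻¹ < (z⁻¹).re := by
  have hpos : 0 < Complex.normSq z + 2 * r * z.re := by
    have h := pow_lt_pow_left₀ hz hr.le two_ne_zero
    rw [Complex.sq_norm, Complex.normSq_add] at h
    simp only [Complex.normSq_ofReal, Complex.conj_ofReal, Complex.mul_re, Complex.ofReal_re,
      Complex.ofReal_im, mul_zero, sub_zero] at h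
    linarith
  rw [Complex.inv_re, lt_div_iff₀ (Complex.normSq_pos.mpr (ne_zero_of_lt_norm_add_ofReal hr hz)),
    neg_mul, neg_lt, ← div_eq_inv_mul, lt_div_iff₀ (by positivity)]
  linarith

section

variable {𝕜 E : Type*} [RCLike 𝕜] [NormedAddCommGroup E] [InnerProductSpace 𝕜 E]

open RCLike

theorem inner_inv_smul_add_smul_left {z : 𝕜} (hz : z ≠ 0) (u v x : E) :
    inner 𝕜 (z⁻¹ • (u + z • v)) x = conj z⁻¹ * inner 𝕜 u x + inner 𝕜 v x := by
  rw [smul_add, smul_smul, inv_mul_cancel₀ hz, one_smul, inner_add_left, inner_smul_left]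

theorem re_inner_apply_self_le_opNorm_mul_sq (T : E →L[𝕜] E) (x : E) :
    re (inner 𝕜 (T x) x) ≤ ‖T‖ * ‖x‖ ^ 2 :=
  calc re (inner 𝕜 (T x) x) ≤ ‖T x‖ * ‖x‖ := re_inner_le_norm _ _
    _ ≤ ‖T‖ * ‖x‖ * ‖x‖ := by gcongr; exact T.le_opNorm x
    _ = ‖T‖ * ‖x‖ ^ 2 := by ring

theorem LinearMap.IsSymmetric.re_conj_mul_inner_apply_self {T : E →L[𝕜] E}
    (hT : (T : E →ₗ[𝕜] E).IsSymmetric) (w : 𝕜) (x : E) :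
    re (conj w * inner 𝕜 (T x) x) = re w * re (inner 𝕜 (T x) x) := by
  rw [← hT.coe_reApplyInnerSelf_apply x, re_mul_ofReal, conj_re, ofReal_re]

end

/-- the estimate of Example 3.6 of the paper.
Let `H` be a complex Hilbert space, `M₀ ∈ L(H)` selfadjoint and non-negative,
`M₁ ∈ L(H)` with `Re⟨M₁x|x⟩ ≥ c‖x‖²` for some `c > 0`, and `r > 0`.  Then for every
`z` with `|z + r| > r` (equivalently `z ≠ 0` and `Re z⁻¹ > −1/(2r)`) and every `x`:
`Re⟨z⁻¹(M₀x + zM₁x)|x⟩ ≥ (c − ‖M₀‖/(2r))‖x‖²`; in particular, if `r > ‖M₀‖/(2c)`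
this lower bound is strictly positive. -/
theorem stmt_9
    {H : Type*} [NormedAddCommGroup H] [InnerProductSpace ℂ H]
    (M₀ M₁ : H →L[ℂ] H) (c r : ℝ) (hc : 0 < c) (hr : 0 < r)
    (hsa : ∀ x y : H, (inner ℂ (M₀ x) y : ℂ) = inner ℂ x (M₀ y))
    (hM₀ : ∀ x : H, 0 ≤ (inner ℂ (M₀ x) x : ℂ).re)
    (hM₁ : ∀ x : H, c * ‖x‖ ^ 2 ≤ (inner ℂ (M₁ x) x : ℂ).re) :
    (∀ z : ℂ, r < ‖z + (r : ℂ)‖ → ∀ x : H,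
      (c - ‖M₀‖ / (2 * r)) * ‖x‖ ^ 2 ≤ (inner ℂ (z⁻¹ • (M₀ x + z • M₁ x)) x : ℂ).re) ∧
    (‖M₀‖ / (2 * c) < r → 0 < c - ‖M₀‖ / (2 * r)) := by
  refine ⟨fun z hz x => ?_, fun h => ?_⟩
  · have hsym : (M₀ : H →ₗ[ℂ] H).IsSymmetric := hsa
    have hre := Complex.neg_inv_two_mul_lt_re_inv hr hz
    rw [inner_inv_smul_add_smul_left (Complex.ne_zero_of_lt_norm_add_ofReal hr hz), Complex.add_re,
      ← RCLike.re_to_complex, hsym.re_conj_mul_inner_apply_self]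
    calc (c - ‖M₀‖ / (2 * r)) * ‖x‖ ^ 2
        = c * ‖x‖ ^ 2 - (2 * r)⁻¹ * (‖M₀‖ * ‖x‖ ^ 2) := by ring
      _ ≤ c * ‖x‖ ^ 2 - (2 * r)⁻¹ * (inner ℂ (M₀ x) x).re := by
        gcongr
        exact re_inner_apply_self_le_opNorm_mul_sq M₀ x
      _ ≤ (z⁻¹).re * (inner ℂ (M₀ x) x).re + (inner ℂ (M₁ x) x).re := by
        have := mul_le_mul_of_nonneg_right hre.le (hM₀ x)
        linarith [hM₁ x]
  · rw [div_lt_iff₀ (by positivity)] at h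
    rw [sub_pos, div_lt_iff₀ (by positivity)]
    linarith
end

section
/- Let H₀ and H₁ be complex Hilbert spaces, r > 0, J ∈ L(H₁,H₀), and let M₀, M₁ : {w ∈ ℂ : |w+r| > r} → L(H₀) satisfy m₀ := sup_w ‖M₀(w)‖ < ∞ and m₁ := sup_w ‖M₁(w)‖ < ∞. Assume: (H1) for every ε > 0 there is η > 0 such that ‖M₁(z^{-1})‖ ≤ ε for all z with 0 < |z| < η and Re z > −1/(2r); and (H2) for every δ' > 0 there exist ρ₀ ∈ (0,1/(2r)) and c > 0 such that Re⟨z M₀(z^{-1})x + M₁(z^{-1})x|x⟩ ≥ c‖x‖² for all x ∈ H₀ and all z with Re z > −ρ₀ and |z| > δ'. For z ≠ 0 with Re z > −1/(2r) and d > 0 define the bounded operator B_d(z) on the Hilbert direct sum H₀ ⊕ H₁ by B_d(z)(x,y) = ( z M₀(z^{-1})x + M₁(z^{-1})x − d M₀(z^{-1})x + d(d M₀(z^{-1}) − M₁(z^{-1}))(J y), (z + d) y ). Then for every a > 0 there exist d₀ > 0 and δ > 0 such that ‖B_{d₀}(z)‖ < a for all z with 0 < |z| ≤ δ and Re z > −1/(2r),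 and there exist ρ₁ ∈ (0,1/(2r)) and c' > 0 such that Re⟨B_{d₀}(z)(x,y)|(x,y)⟩ ≥ c'(‖x‖² + ‖y‖²) for all (x,y) ∈ H₀ ⊕ H₁ and all z with Re z > −ρ₁ and |z| > δ. -/
/-!
For small `|z|` every entry of `B_d(z)` is small: `‖z M₀(z⁻¹)‖ ≤ |z| m₀`, `‖M₁(z⁻¹)‖` is small by
(H1), and all remaining entries carry a factor `d`. For `|z| > δ`, (H2) controls the `x`-part,
the `y`-part contributes `(Re z + d)‖y‖² ≥ (3d/4)‖y‖²` once `Re z > -d/4`, and Young's inequality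
absorbs the cross term `d⟨(dM₀ - M₁)(Jy)|x⟩` as soon as `d` is small compared with `c`.
The constants are chosen in the order `η` (from (H1) with `ε = a/4`), `δ`, `c` (from (H2) at `δ`),
and finally `d₀`.
-/

open Filter Topology

lemma lt_norm_inv_add_ofReal {r : ℝ} (hr : 0 < r) {z : ℂ} (hz : z ≠ 0)
    (hre : -(1 / (2 * r)) < z.re) : r < ‖z⁻¹ + (r : ℂ)‖ := by
  have hpos : 0 < 1 + 2 * r * z.re := by
    have := mul_lt_mul_of_pos_left hre (by positivity : 0 < 2 * r)
    field_simp at this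
    linarith
  -- `‖z⁻¹ + r‖ = ‖1 + r z‖ / ‖z‖` and `‖1 + r z‖² = 1 + 2 r Re z + r² ‖z‖²`
  have hsq : (r * ‖z‖) ^ 2 < ‖1 + (r : ℂ) * z‖ ^ 2 := by
    rw [mul_pow, Complex.sq_norm, Complex.sq_norm, Complex.normSq_apply, Complex.normSq_apply]
    simp only [Complex.add_re, Complex.add_im, Complex.mul_re, Complex.mul_im,
      Complex.one_re, Complex.one_im, Complex.ofReal_re, Complex.ofReal_im]
    nlinarith
  have hnorm : ‖z⁻¹ + (r : ℂ)‖ = ‖1 + (r : ℂ) * z‖ / ‖z‖ := by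
    rw [eq_div_iff (norm_ne_zero_iff.mpr hz), ← norm_mul, add_mul, inv_mul_cancel₀ hz, mul_comm]
  rw [hnorm, lt_div_iff₀ (norm_pos_iff.mpr hz)]
  exact lt_of_pow_lt_pow_left₀ 2 (norm_nonneg _) hsq

lemma exists_pos_of_eventually_nhds_zero {p : ℝ → Prop} (h : ∀ᶠ d in 𝓝 0, p d) :
    ∃ d, 0 < d ∧ p d :=
  ((eventually_mem_nhdsWithin (s := Set.Ioi 0) (a := 0)).and
    (h.filter_mono nhdsWithin_le_nhds)).exists

lemma eventually_mul_lt_nhds_zero (A : ℝ) {a : ℝ} (ha : 0 < a) :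
    ∀ᶠ d in 𝓝 (0 : ℝ), d * A < a := by
  have : Tendsto (· * A) (𝓝 (0 : ℝ)) (𝓝 0) := by
    simpa using (continuous_mul_const A).tendsto 0
  exact this.eventually (eventually_lt_nhds ha)

lemma sqrt_sq_add_sq_le {u v : ℝ} (hu : 0 ≤ u) (hv : 0 ≤ v) : √(u ^ 2 + v ^ 2) ≤ u + v :=
  (Real.sqrt_le_left (by positivity)).mpr (by nlinarith)

lemma le_sqrt_sq_add_sq {u : ℝ} (hu : 0 ≤ u) (v : ℝ) : u ≤ √(u ^ 2 + v ^ 2) :=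
  (Real.le_sqrt hu (by positivity)).mpr (by nlinarith)

lemma min_half_mul_add_sq_le {c d m K X Y t : ℝ} (hd : 0 ≤ d) (ht : -(d / 4) ≤ t)
    (hdc : d * (m + K ^ 2) ≤ c / 2) :
    min (c / 2) (d / 2) * (X ^ 2 + Y ^ 2) ≤
      c * X ^ 2 - d * m * X ^ 2 - d * K * (X * Y) + (t + d) * Y ^ 2 := by
  nlinarith [mul_nonneg hd (sq_nonneg (K * X - Y / 2)), min_le_left (c / 2) (d / 2),
    min_le_right (c / 2) (d / 2), sq_nonneg X, sq_nonneg Y]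

section

variable {E F : Type*} [NormedAddCommGroup E] [NormedSpace ℂ E]
  [NormedAddCommGroup F] [NormedSpace ℂ F]

lemma norm_smul_sub_apply_le (P Q : E →L[ℂ] E) (J : F →L[ℂ] E) {d : ℝ} (hd : 0 ≤ d) (y : F) :
    ‖(d • P - Q) (J y)‖ ≤ (d * ‖P‖ + ‖Q‖) * ‖J‖ * ‖y‖ := by
  have hop : ‖d • P - Q‖ ≤ d * ‖P‖ + ‖Q‖ := by
    refine (norm_sub_le _ _).trans ?_
    rw [norm_smul, Real.norm_of_nonneg hd]
  calc ‖(d • P - Q) (J y)‖ ≤ ‖d • P - Q‖ * (‖J‖ * ‖y‖) :=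
        (d • P - Q).le_opNorm_of_le (J.le_opNorm y)
    _ ≤ (d * ‖P‖ + ‖Q‖) * (‖J‖ * ‖y‖) := by gcongr
    _ = (d * ‖P‖ + ‖Q‖) * ‖J‖ * ‖y‖ := by ring

lemma norm_block_first_le (P Q : E →L[ℂ] E) (J : F →L[ℂ] E) (z : ℂ) {d : ℝ} (hd : 0 ≤ d)
    (x : E) (y : F) :
    ‖z • P x + Q x - d • P x + d • ((d • P - Q) (J y))‖ ≤
      (‖z‖ * ‖P‖ + ‖Q‖ + d * ‖P‖) * ‖x‖ + d * ((d * ‖P‖ + ‖Q‖) * ‖J‖) * ‖y‖ := by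
  have hzP : ‖z • P x‖ ≤ ‖z‖ * (‖P‖ * ‖x‖) := by
    rw [norm_smul]; gcongr; exact P.le_opNorm x
  have hdP : ‖d • P x‖ ≤ d * (‖P‖ * ‖x‖) := by
    rw [norm_smul, Real.norm_of_nonneg hd]; gcongr; exact P.le_opNorm x
  have hdW : ‖d • ((d • P - Q) (J y))‖ ≤ d * ((d * ‖P‖ + ‖Q‖) * ‖J‖ * ‖y‖) := by
    rw [norm_smul, Real.norm_of_nonneg hd]; gcongr; exact norm_smul_sub_apply_le P Q J hd y
  calc _ ≤ ‖z • P x‖ + ‖Q x‖ + ‖d • P x‖ + ‖d • ((d • P - Q) (J y))‖ :=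
        (norm_add_le _ _).trans
          (by gcongr; exact (norm_sub_le _ _).trans (by gcongr; exact norm_add_le _ _))
    _ ≤ ‖z‖ * (‖P‖ * ‖x‖) + ‖Q‖ * ‖x‖ + d * (‖P‖ * ‖x‖)
          + d * ((d * ‖P‖ + ‖Q‖) * ‖J‖ * ‖y‖) := by
        gcongr; exact Q.le_opNorm x
    _ = _ := by ring

lemma sqrt_norm_block_le (P Q : E →L[ℂ] E) (J : F →L[ℂ] E) (z : ℂ) {d : ℝ} (hd : 0 ≤ d)
    (x : E) (y : F) :
    √(‖z • P x + Q x - d • P x + d • ((d • P - Q) (J y))‖ ^ 2 + ‖(z + (d : ℂ)) • y‖ ^ 2) ≤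
      ((‖z‖ + d) * (‖P‖ + 1) + ‖Q‖ + d * ((d * ‖P‖ + ‖Q‖) * ‖J‖)) * √(‖x‖ ^ 2 + ‖y‖ ^ 2) := by
  set s := √(‖x‖ ^ 2 + ‖y‖ ^ 2)
  have hxs : ‖x‖ ≤ s := le_sqrt_sq_add_sq (norm_nonneg x) _
  have hys : ‖y‖ ≤ s := by
    simpa only [add_comm] using le_sqrt_sq_add_sq (norm_nonneg y) ‖x‖
  have hv : ‖(z + (d : ℂ)) • y‖ ≤ (‖z‖ + d) * ‖y‖ := by
    rw [norm_smul]
    gcongr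
    exact (norm_add_le _ _).trans_eq (by rw [Complex.norm_real, Real.norm_of_nonneg hd])
  calc _ ≤ ‖z • P x + Q x - d • P x + d • ((d • P - Q) (J y))‖ + ‖(z + (d : ℂ)) • y‖ :=
        sqrt_sq_add_sq_le (norm_nonneg _) (norm_nonneg _)
    _ ≤ (‖z‖ * ‖P‖ + ‖Q‖ + d * ‖P‖) * ‖x‖ + d * ((d * ‖P‖ + ‖Q‖) * ‖J‖) * ‖y‖
          + (‖z‖ + d) * ‖y‖ := add_le_add (norm_block_first_le P Q J z hd x y) hv
    _ ≤ (‖z‖ * ‖P‖ + ‖Q‖ + d * ‖P‖) * s + d * ((d * ‖P‖ + ‖Q‖) * ‖J‖) * s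
          + (‖z‖ + d) * s := by gcongr
    _ = _ := by ring

end

section

variable {E F : Type*} [NormedAddCommGroup E] [InnerProductSpace ℂ E]
  [NormedAddCommGroup F] [InnerProductSpace ℂ F]

lemma re_inner_smul_self (z : ℂ) (y : F) : (inner ℂ (z • y) y).re = z.re * ‖y‖ ^ 2 := by
  have hre : (inner ℂ y y).re = ‖y‖ ^ 2 := inner_self_eq_norm_sq (𝕜 := ℂ) y
  have him : (inner ℂ y y).im = 0 := inner_self_im (𝕜 := ℂ) y
  rw [inner_smul_left, Complex.mul_re, Complex.conj_re, Complex.conj_im, hre, him]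
  ring

lemma re_inner_block_ge (P Q : E →L[ℂ] E) (J : F →L[ℂ] E) (z : ℂ) {d : ℝ} (hd : 0 ≤ d)
    (x : E) (y : F) :
    (inner ℂ (z • P x + Q x) x).re - d * ‖P‖ * ‖x‖ ^ 2
        - d * ((d * ‖P‖ + ‖Q‖) * ‖J‖) * (‖x‖ * ‖y‖) + (z.re + d) * ‖y‖ ^ 2 ≤
      (inner ℂ (z • P x + Q x - d • P x + d • ((d • P - Q) (J y))) x).re
        + (inner ℂ ((z + (d : ℂ)) • y) y).re := by
  set W := (d • P - Q) (J y)
  have hPx : (inner ℂ (P x) x).re ≤ ‖P‖ * ‖x‖ ^ 2 :=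
    calc (inner ℂ (P x) x).re ≤ ‖P x‖ * ‖x‖ :=
          (Complex.re_le_norm _).trans (norm_inner_le_norm _ _)
      _ ≤ ‖P‖ * ‖x‖ * ‖x‖ := by gcongr; exact P.le_opNorm x
      _ = ‖P‖ * ‖x‖ ^ 2 := by ring
  have hWx : -((d * ‖P‖ + ‖Q‖) * ‖J‖ * (‖x‖ * ‖y‖)) ≤ (inner ℂ W x).re := by
    refine neg_le_of_abs_le ((Complex.abs_re_le_norm _).trans ((norm_inner_le_norm _ _).trans ?_))
    calc ‖W‖ * ‖x‖ ≤ (d * ‖P‖ + ‖Q‖) * ‖J‖ * ‖y‖ * ‖x‖ := by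
          gcongr; exact norm_smul_sub_apply_le P Q J hd y
      _ = _ := by ring
  simp only [inner_add_left, inner_sub_left, inner_smul_left_eq_smul, Complex.add_re,
    Complex.sub_re, Complex.smul_re, smul_eq_mul, re_inner_smul_self, Complex.ofReal_re]
  nlinarith [mul_le_mul_of_nonneg_left hPx hd, mul_le_mul_of_nonneg_left hWx hd]

end

/-- Proposition 3.7 of the paper.
Let `H₀, H₁` be complex Hilbert spaces, `r > 0`, `J ∈ L(H₁,H₀)` (the role of `C⁻¹`),
and `M₀, M₁` families on `{w : |w+r| > r}` bounded by `m₀, m₁`.  Assume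
(H1) `‖M₁(z⁻¹)‖ → 0` as `z → 0` in `{Re z > −1/(2r)}`, and
(H2) for every `δ' > 0` there are `ρ₀ ∈ (0,1/(2r))` and `c > 0` with
`Re⟨zM₀(z⁻¹)x + M₁(z⁻¹)x|x⟩ ≥ c‖x‖²` for `Re z > −ρ₀`, `|z| > δ'`.
For `d > 0` let `B_d(z)(x,y) = (zM₀(z⁻¹)x + M₁(z⁻¹)x − dM₀(z⁻¹)x
+ d(dM₀(z⁻¹) − M₁(z⁻¹))(Jy), (z+d)y)` on the Hilbert direct sum `H₀ ⊕ H₁`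
(whose norm is `√(‖x‖² + ‖y‖²)` and whose inner product is the sum of the component
inner products).  Then for every `a > 0` there are `d₀ > 0` and `δ > 0` such that
`‖B_{d₀}(z)‖ < a` for `0 < |z| ≤ δ`, `Re z > −1/(2r)`, and there are
`ρ₁ ∈ (0,1/(2r))`, `c' > 0` with `Re⟨B_{d₀}(z)(x,y)|(x,y)⟩ ≥ c'(‖x‖² + ‖y‖²)` for
`Re z > −ρ₁`, `|z| > δ`. -/
theorem stmt_10
    {H₀ : Type*} [NormedAddCommGroup H₀] [InnerProductSpace ℂ H₀]
    {H₁ : Type*} [NormedAddCommGroup H₁] [InnerProductSpace ℂ H₁]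
    (r : ℝ) (hr : 0 < r) (J : H₁ →L[ℂ] H₀)
    (M₀ M₁ : ℂ → H₀ →L[ℂ] H₀) (m₀ m₁ : ℝ)
    (hm₀ : ∀ w : ℂ, r < ‖w + (r : ℂ)‖ → ‖M₀ w‖ ≤ m₀)
    (hm₁ : ∀ w : ℂ, r < ‖w + (r : ℂ)‖ → ‖M₁ w‖ ≤ m₁)
    (H1 : ∀ ε : ℝ, 0 < ε → ∃ η : ℝ, 0 < η ∧ ∀ z : ℂ, z ≠ 0 →
      ‖z‖ < η → -(1 / (2 * r)) < z.re → ‖M₁ z⁻¹‖ ≤ ε)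
    (H2 : ∀ δ' : ℝ, 0 < δ' → ∃ ρ₀ : ℝ, 0 < ρ₀ ∧ ρ₀ < 1 / (2 * r) ∧ ∃ c : ℝ, 0 < c ∧
      ∀ z : ℂ, -ρ₀ < z.re → δ' < ‖z‖ →
        ∀ x : H₀, c * ‖x‖ ^ 2 ≤ (inner ℂ (z • M₀ z⁻¹ x + M₁ z⁻¹ x) x : ℂ).re) :
    ∀ a : ℝ, 0 < a → ∃ d₀ : ℝ, 0 < d₀ ∧ ∃ δ : ℝ, 0 < δ ∧
      -- the boundedness condition: `‖B_{d₀}(z)‖ < a` for `0 < |z| ≤ δ`, `Re z > −1/(2r)`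
      (∀ z : ℂ, z ≠ 0 → ‖z‖ ≤ δ → -(1 / (2 * r)) < z.re →
        ∃ a' : ℝ, a' < a ∧ ∀ (x : H₀) (y : H₁),
          Real.sqrt (‖z • M₀ z⁻¹ x + M₁ z⁻¹ x - d₀ • M₀ z⁻¹ x
              + d₀ • ((d₀ • M₀ z⁻¹ - M₁ z⁻¹) (J y))‖ ^ 2 + ‖(z + (d₀ : ℂ)) • y‖ ^ 2)
            ≤ a' * Real.sqrt (‖x‖ ^ 2 + ‖y‖ ^ 2)) ∧
      -- the positivity condition
      (∃ ρ₁ : ℝ, 0 < ρ₁ ∧ ρ₁ < 1 / (2 * r) ∧ ∃ c' : ℝ, 0 < c' ∧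
        ∀ z : ℂ, -ρ₁ < z.re → δ < ‖z‖ → ∀ (x : H₀) (y : H₁),
          c' * (‖x‖ ^ 2 + ‖y‖ ^ 2) ≤
            (inner ℂ (z • M₀ z⁻¹ x + M₁ z⁻¹ x - d₀ • M₀ z⁻¹ x
                + d₀ • ((d₀ • M₀ z⁻¹ - M₁ z⁻¹) (J y))) x : ℂ).re
              + (inner ℂ ((z + (d₀ : ℂ)) • y) y : ℂ).re) := by
  intro a ha
  have ha4 : 0 < a / 4 := by positivity
  obtain ⟨η, hη, hM₁small⟩ := H1 (a / 4) ha4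
  obtain ⟨δ, hδ, hδη, hδa⟩ := exists_pos_of_eventually_nhds_zero
    ((eventually_lt_nhds hη).and (eventually_mul_lt_nhds_zero (m₀ + 1) ha4))
  obtain ⟨ρ₀, hρ₀, hρ₀r, c, hc, hcoer⟩ := H2 δ hδ
  generalize hK : (m₀ + m₁) * ‖J‖ = K
  obtain ⟨d, hd, hd1, hda, hdc⟩ := exists_pos_of_eventually_nhds_zero
    ((eventually_le_nhds one_pos).and ((eventually_mul_lt_nhds_zero (m₀ + 1 + K) ha4).and
      (eventually_mul_lt_nhds_zero (m₀ + K ^ 2) (half_pos hc))))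
  have hbounds : ∀ z : ℂ, z ≠ 0 → -(1 / (2 * r)) < z.re →
      ‖M₀ z⁻¹‖ ≤ m₀ ∧ (d * ‖M₀ z⁻¹‖ + ‖M₁ z⁻¹‖) * ‖J‖ ≤ K := by
    intro z hz hzre
    have hreg := lt_norm_inv_add_ofReal hr hz hzre
    have hP := hm₀ _ hreg
    refine ⟨hP, ?_⟩
    have : d * ‖M₀ z⁻¹‖ ≤ m₀ := (mul_le_of_le_one_left (norm_nonneg _) hd1).trans hP
    rw [← hK]
    gcongr
    exact hm₁ _ hreg
  refine ⟨d, hd, δ, hδ, fun z hz hzδ hzre => ⟨3 * a / 4, by linarith, fun x y => ?_⟩,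
    min ρ₀ (d / 4), by positivity, (min_le_left _ _).trans_lt hρ₀r, min (c / 2) (d / 2),
    by positivity, fun z hzre hzδ x y => ?_⟩
  · obtain ⟨hP, hcoup⟩ := hbounds z hz hzre
    have hQ := hM₁small z hz (hzδ.trans_lt hδη) hzre
    refine (sqrt_norm_block_le _ _ J z hd.le x y).trans
      (mul_le_mul_of_nonneg_right ?_ (Real.sqrt_nonneg _))
    calc (‖z‖ + d) * (‖M₀ z⁻¹‖ + 1) + ‖M₁ z⁻¹‖ + d * ((d * ‖M₀ z⁻¹‖ + ‖M₁ z⁻¹‖) * ‖J‖)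
        ≤ (δ + d) * (m₀ + 1) + a / 4 + d * K := by gcongr
      _ ≤ 3 * a / 4 := by linarith
  · have hz : z ≠ 0 := by
      rintro rfl
      simp only [norm_zero] at hzδ
      linarith
    have hzρ₀ : -ρ₀ < z.re := by linarith [min_le_left ρ₀ (d / 4)]
    obtain ⟨hP, hcoup⟩ := hbounds z hz (by linarith)
    calc _ ≤ c * ‖x‖ ^ 2 - d * m₀ * ‖x‖ ^ 2 - d * K * (‖x‖ * ‖y‖) + (z.re + d) * ‖y‖ ^ 2 :=
          min_half_mul_add_sq_le hd.le (by linarith [min_le_right ρ₀ (d / 4)]) hdc.le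
      _ ≤ (inner ℂ (z • M₀ z⁻¹ x + M₁ z⁻¹ x) x).re - d * ‖M₀ z⁻¹‖ * ‖x‖ ^ 2
            - d * ((d * ‖M₀ z⁻¹‖ + ‖M₁ z⁻¹‖) * ‖J‖) * (‖x‖ * ‖y‖) + (z.re + d) * ‖y‖ ^ 2 := by
          gcongr
          exact hcoer z hzρ₀ hzδ x
      _ ≤ _ := re_inner_block_ge _ _ J z hd.le x y
end

section
/- Let H be a complex Hilbert space, α > 0, and k : [0,∞) → L(H) strongly measurable with t ↦ ‖k(t)‖ measurable and |k|_{1,−α} := ∫₀^∞ e^{αt}‖k(t)‖ dt < 1. Assume k(t) is selfadjoint for a.e. t ≥ 0 and k(t)k(s) = k(s)k(t) for a.e. t, s ≥ 0. For t ∈ ℝ and ρ > −α let k̂(t−iρ) := (2π)^{−1/2}∫₀^∞ e^{−its}e^{−ρs}k(s) ds (Bochner integral), and note that 1 − √(2π) k̂(t−iρ) is invertible in L(H) since ‖√(2π) k̂(t−iρ)‖ ≤ |k|_{1,−α} < 1. Let δ > 0 and suppose there is g : (−α,∞) → [0,∞), continuous at 0 with g(0) > 0, such that ⟨t·Im k̂(t−iρ)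 x|x⟩ ≤ −g(ρ)‖x‖² for all x ∈ H, all t with |t| > δ, and all ρ > −α. Then there exist ρ₀ ∈ (0,α) and c > 0 such that for all t with |t| > δ, all ρ > −ρ₀, and all x ∈ H, with z = it + ρ: Re⟨z(1 − √(2π) k̂(t−iρ))^{-1}x|x⟩ ≥ c‖x‖². -/
open MeasureTheory

variable {H : Type*} [NormedAddCommGroup H] [InnerProductSpace ℂ H] [CompleteSpace H]

/-- The operator-valued Fourier–Laplace transform
`k̂(t − iρ) = (2π)^{-1/2} ∫₀^∞ e^{−its} e^{−ρs} k(s) ds` (Bochner integral). -/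
noncomputable def fourierLaplace (k : ℝ → H →L[ℂ] H) (t ρ : ℝ) : H →L[ℂ] H :=
  (Real.sqrt (2 * Real.pi))⁻¹ •
    ∫ s in Set.Ioi (0 : ℝ), Complex.exp (-(Complex.I * t * s) - ρ * s) • k s

/-- The imaginary part `Im T = (2i)⁻¹ (T − T*)` of a bounded operator. -/
noncomputable def imPart (T : H →L[ℂ] H) : H →L[ℂ] H :=
  (2 * Complex.I)⁻¹ • (T - ContinuousLinearMap.adjoint T)

/-! With `B = √(2π) k̂(t − iρ)` and `y = S x` we have `x = y − B y`, hence
`Re⟨z S x, x⟩ = ρ (‖y‖² − Re⟨y, B y⟩) − t Im⟨y, B y⟩`. Since `‖B‖ ≤ q := |k|_{1,−α} < 1`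
for `ρ ≥ −α`, and `−t Im⟨y, B y⟩ ≥ √(2π) g(ρ) ‖y‖²` by the hypothesis on `Im k̂`, this is at least
`(ρ − |ρ| q + √(2π) g(ρ)) ‖y‖²`, while `‖x‖ ≤ (1 + q) ‖y‖ ≤ 2 ‖y‖`. The coefficient stays
uniformly positive for `ρ > −ρ₀`: on a neighbourhood `|ρ| < ε` of `0` continuity gives
`g(ρ) ≥ g(0)/2`, which beats `ρ − |ρ| q ≥ −2ρ₀` once `ρ₀` is small against `g(0)`; for `ρ ≥ ε`
the term `ρ (1 − q) ≥ ε (1 − q)` suffices. -/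

lemma inner_imPart_apply_self (T : H →L[ℂ] H) (y : H) :
    inner ℂ (imPart T y) y = ((inner ℂ y (T y)).im : ℂ) := by
  rw [imPart, smul_apply, inner_smul_left, sub_apply, inner_sub_left,
    ContinuousLinearMap.adjoint_inner_left, ← inner_conj_symm (T y) y, ← neg_sub, Complex.sub_conj]
  simp only [map_inv₀, map_mul, Complex.conj_I, map_ofNat]
  push_cast
  field_simp

lemma mul_im_inner_real_smul_apply (t s : ℝ) (T : H →L[ℂ] H) (y : H) :
    t * (inner ℂ y ((s • T) y)).im = s * (inner ℂ ((t • imPart T) y) y).re := by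
  rw [smul_apply, smul_apply, RCLike.real_smul_eq_coe_smul (K := ℂ),
    RCLike.real_smul_eq_coe_smul (K := ℂ), inner_smul_real_left, inner_smul_real_right,
    inner_imPart_apply_self, Complex.smul_re, Complex.smul_im, Complex.ofReal_re, smul_eq_mul,
    smul_eq_mul]
  ring

lemma norm_sqrt_two_pi_smul_fourierLaplace_le {k : ℝ → H →L[ℂ] H} {α ρ : ℝ} (t : ℝ)
    (hint : IntegrableOn (fun s => Real.exp (α * s) * ‖k s‖) (Set.Ioi 0)) (hρ : -α ≤ ρ) :
    ‖Real.sqrt (2 * Real.pi) • fourierLaplace k t ρ‖ ≤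
      ∫ s in Set.Ioi 0, Real.exp (α * s) * ‖k s‖ := by
  rw [fourierLaplace, smul_inv_smul₀ (by positivity)]
  refine norm_integral_le_of_norm_le hint ?_
  filter_upwards [self_mem_ae_restrict measurableSet_Ioi] with s (hs : 0 < s)
  rw [norm_smul, Complex.norm_exp]
  gcongr
  simp only [Complex.sub_re, Complex.neg_re, Complex.mul_re, Complex.I_re, Complex.I_im,
    Complex.ofReal_re, Complex.ofReal_im]
  nlinarith

section RightInverse

variable {E : Type*} [NormedAddCommGroup E] [InnerProductSpace ℂ E] {B S : E →L[ℂ] E} {q : ℝ}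

lemma norm_le_one_add_mul_norm_apply (hB : ‖B‖ ≤ q) (hS : (1 - B).comp S = 1) (x : E) :
    ‖x‖ ≤ (1 + q) * ‖S x‖ := by
  have hx : x = S x - B (S x) := by simpa using (congrArg (· x) hS).symm
  calc ‖x‖ = ‖S x - B (S x)‖ := congrArg _ hx
    _ ≤ ‖S x‖ + ‖B‖ * ‖S x‖ := (norm_sub_le _ _).trans (by gcongr; exact B.le_opNorm _)
    _ ≤ (1 + q) * ‖S x‖ := by nlinarith [norm_nonneg (S x)]

lemma le_re_inner_smul_apply {m t ρ : ℝ} (hB : ‖B‖ ≤ q) (hS : (1 - B).comp S = 1)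
    (hm : ∀ y, t * (inner ℂ y (B y)).im ≤ -m * ‖y‖ ^ 2) (x : E) :
    (ρ - |ρ| * q + m) * ‖S x‖ ^ 2 ≤ (inner ℂ ((Complex.I * t + ρ) • S x) x).re := by
  set y := S x
  set w := inner ℂ y (B y)
  have hx : x = y - B y := by simpa using (congrArg (· x) hS).symm
  have hw : |w.re| ≤ q * ‖y‖ ^ 2 :=
    calc |w.re| ≤ ‖y‖ * ‖B y‖ := (Complex.abs_re_le_norm w).trans (norm_inner_le_norm _ _)
      _ ≤ ‖y‖ * (q * ‖y‖) := by gcongr; exact (B.le_opNorm y).trans (by gcongr)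
      _ = q * ‖y‖ ^ 2 := by ring
  have hρw : ρ * w.re ≤ |ρ| * (q * ‖y‖ ^ 2) :=
    (le_abs_self _).trans (abs_mul ρ w.re ▸ mul_le_mul_of_nonneg_left hw (abs_nonneg ρ))
  have hval : (inner ℂ ((Complex.I * t + ρ) • y) x).re = ρ * (‖y‖ ^ 2 - w.re) - t * w.im := by
    rw [hx, inner_smul_left, inner_sub_right, inner_self_eq_norm_sq_to_K]
    simp [w, Complex.mul_re, Complex.mul_im, ← Complex.ofReal_pow]
  rw [hval]
  nlinarith [hm y]

end RightInverse

lemma exists_pos_le_sub_abs_mul_add {α q : ℝ} {g : ℝ → ℝ} (hα : 0 < α) (hq : q < 1)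
    (hg_nonneg : ∀ ρ, -α < ρ → 0 ≤ g ρ) (hg_cont : ContinuousAt g 0) (hg_pos : 0 < g 0) :
    ∃ ρ₀, 0 < ρ₀ ∧ ρ₀ < α ∧ ∃ c, 0 < c ∧ ∀ ρ, -ρ₀ < ρ → c ≤ ρ - |ρ| * q + g ρ := by
  obtain ⟨ε, hε, hεg⟩ := Metric.eventually_nhds_iff.mp
    (hg_cont.eventually (lt_mem_nhds (half_lt_self hg_pos)))
  set ρ₀ := min (min ε (α / 2)) (g 0 / 8)
  have hρ₀ε : ρ₀ ≤ ε := (min_le_left _ _).trans (min_le_left _ _)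
  have hρ₀α : ρ₀ ≤ α / 2 := (min_le_left _ _).trans (min_le_right _ _)
  have hρ₀g : ρ₀ ≤ g 0 / 8 := min_le_right _ _
  have hρ₀ : 0 < ρ₀ := by positivity
  set c := min (ε * (1 - q)) (g 0 / 4)
  refine ⟨ρ₀, hρ₀, by linarith, c, lt_min (mul_pos hε (by linarith)) (by positivity),
    fun ρ hρ => ?_⟩
  rcases lt_or_ge ρ ε with hρε | hερ
  · have hgρ : g 0 / 2 < g ρ :=
      hεg (by rw [Real.dist_eq, sub_zero, abs_lt]; constructor <;> linarith)
    have : -(2 * ρ₀) ≤ ρ - |ρ| * q := by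
      rcases le_or_gt 0 ρ with h0 | h0
      · rw [abs_of_nonneg h0]; nlinarith [mul_nonneg h0 (sub_nonneg.2 hq.le)]
      · rw [abs_of_neg h0]; nlinarith
    linarith [min_le_right (ε * (1 - q)) (g 0 / 4)]
  · have hgρ : 0 ≤ g ρ := hg_nonneg ρ (by linarith)
    rw [abs_of_pos (hε.trans_le hερ)]
    nlinarith [min_le_left (ε * (1 - q)) (g 0 / 4)]

theorem stmt_11_general
    (α : ℝ) (hα : 0 < α)
    (k : ℝ → H →L[ℂ] H)
    (hint : IntegrableOn (fun s => Real.exp (α * s) * ‖k s‖) (Set.Ioi (0 : ℝ)))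
    (hlt1 : ∫ s in Set.Ioi (0 : ℝ), Real.exp (α * s) * ‖k s‖ < 1)
    (δ : ℝ)
    (g : ℝ → ℝ) (hg_nonneg : ∀ ρ : ℝ, -α < ρ → 0 ≤ g ρ)
    (hg_cont : ContinuousAt g 0) (hg_pos : 0 < g 0)
    (hIm : ∀ t ρ : ℝ, δ < |t| → -α < ρ → ∀ x : H,
      (inner ℂ ((t • imPart (fourierLaplace k t ρ)) x) x : ℂ).re ≤ -(g ρ) * ‖x‖ ^ 2) :
    ∃ ρ₀ : ℝ, 0 < ρ₀ ∧ ρ₀ < α ∧ ∃ c : ℝ, 0 < c ∧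
      ∀ t ρ : ℝ, δ < |t| → -ρ₀ < ρ →
        ∀ S : H →L[ℂ] H,
          S.comp (1 - Real.sqrt (2 * Real.pi) • fourierLaplace k t ρ) = 1 →
          (1 - Real.sqrt (2 * Real.pi) • fourierLaplace k t ρ).comp S = 1 →
          ∀ x : H,
            c * ‖x‖ ^ 2 ≤ (inner ℂ (((Complex.I * t + ρ) • S) x) x : ℂ).re := by
  set q := ∫ s in Set.Ioi (0 : ℝ), Real.exp (α * s) * ‖k s‖
  have hs : 0 < Real.sqrt (2 * Real.pi) := by positivity
  obtain ⟨ρ₀, hρ₀, hρ₀α, c, hc, hmargin⟩ := exists_pos_le_sub_abs_mul_add (q := q)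
    (g := fun ρ => Real.sqrt (2 * Real.pi) * g ρ) hα hlt1
    (fun ρ hρ => mul_nonneg hs.le (hg_nonneg ρ hρ)) (continuousAt_const.mul hg_cont)
    (mul_pos hs hg_pos)
  refine ⟨ρ₀, hρ₀, hρ₀α, c / 4, by positivity, fun t ρ ht hρ S _ hS x => ?_⟩
  have hρα : -α < ρ := by linarith
  have hB := norm_sqrt_two_pi_smul_fourierLaplace_le t hint hρα.le
  have hm : ∀ y, t * (inner ℂ y ((Real.sqrt (2 * Real.pi) • fourierLaplace k t ρ) y)).im ≤
      -(Real.sqrt (2 * Real.pi) * g ρ) * ‖y‖ ^ 2 := fun y => by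
    rw [mul_im_inner_real_smul_apply]
    linarith [mul_le_mul_of_nonneg_left (hIm t ρ ht hρα y) hs.le]
  have hx : ‖x‖ ≤ 2 * ‖S x‖ :=
    (norm_le_one_add_mul_norm_apply hB hS x).trans (by gcongr; linarith)
  calc c / 4 * ‖x‖ ^ 2 ≤ c / 4 * (2 * ‖S x‖) ^ 2 := by gcongr
    _ = c * ‖S x‖ ^ 2 := by ring
    _ ≤ (ρ - |ρ| * q + Real.sqrt (2 * Real.pi) * g ρ) * ‖S x‖ ^ 2 := by
        gcongr; exact hmargin ρ hρ
    _ ≤ _ := le_re_inner_smul_apply hB hS hm x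

/-- Subsection 3.2 of the paper: the material law
`M(z) = (1 − √(2π) k̂(−iz⁻¹))⁻¹` satisfies the local positivity (eq:pos_def_M_locally).
Let `k : [0,∞) → L(H)` be strongly measurable with measurable norm,
`∫₀^∞ e^{αt}‖k(t)‖ dt < 1`, `k(t)` selfadjoint a.e. and pairwise commuting a.e.
Let `δ > 0` and let `g : (−α,∞) → [0,∞)` be continuous at `0` with `g(0) > 0` such
that `⟨t·Im k̂(t−iρ)x|x⟩ ≤ −g(ρ)‖x‖²` for `|t| > δ`, `ρ > −α`.  Then there are
`ρ₀ ∈ (0,α)` and `c > 0` such that for all `|t| > δ`, `ρ > −ρ₀`, every two-sided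
inverse `S` of `1 − √(2π) k̂(t−iρ)` and all `x ∈ H`, with `z = it + ρ`:
`Re⟨z S x|x⟩ ≥ c‖x‖²`. -/
theorem stmt_11
    (α : ℝ) (hα : 0 < α)
    (k : ℝ → H →L[ℂ] H)
    (hmeas : AEStronglyMeasurable k (volume.restrict (Set.Ioi (0 : ℝ))))
    (hnorm_meas : Measurable fun t => ‖k t‖)
    (hint : IntegrableOn (fun s => Real.exp (α * s) * ‖k s‖) (Set.Ioi (0 : ℝ)))
    (hlt1 : ∫ s in Set.Ioi (0 : ℝ), Real.exp (α * s) * ‖k s‖ < 1)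
    (hsa : ∀ᵐ s ∂(volume.restrict (Set.Ioi (0 : ℝ))), IsSelfAdjoint (k s))
    (hcomm : ∀ᵐ s ∂(volume.restrict (Set.Ioi (0 : ℝ))),
      ∀ᵐ u ∂(volume.restrict (Set.Ioi (0 : ℝ))), Commute (k s) (k u))
    (δ : ℝ) (hδ : 0 < δ)
    (g : ℝ → ℝ) (hg_nonneg : ∀ ρ : ℝ, -α < ρ → 0 ≤ g ρ)
    (hg_cont : ContinuousAt g 0) (hg_pos : 0 < g 0)
    (hIm : ∀ t ρ : ℝ, δ < |t| → -α < ρ → ∀ x : H,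
      (inner ℂ ((t • imPart (fourierLaplace k t ρ)) x) x : ℂ).re ≤ -(g ρ) * ‖x‖ ^ 2) :
    ∃ ρ₀ : ℝ, 0 < ρ₀ ∧ ρ₀ < α ∧ ∃ c : ℝ, 0 < c ∧
      ∀ t ρ : ℝ, δ < |t| → -ρ₀ < ρ →
        ∀ S : H →L[ℂ] H,
          S.comp (1 - Real.sqrt (2 * Real.pi) • fourierLaplace k t ρ) = 1 →
          (1 - Real.sqrt (2 * Real.pi) • fourierLaplace k t ρ).comp S = 1 →
          ∀ x : H,
            c * ‖x‖ ^ 2 ≤ (inner ℂ (((Complex.I * t + ρ) • S) x) x : ℂ).re :=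
  stmt_11_general α hα k hint hlt1 δ g hg_nonneg hg_cont hg_pos hIm
end

section
/- Let k : ℝ → ℝ satisfy: k(s) ≥ 0 for s ≥ 0, k is locally absolutely continuous on [0,∞) with a.e. derivative k', k(0) > 0, ∫₀^∞ k(s) ds < 1, and k'(s) ≤ −α₀ k(s) for a.e. s ≥ 0, for some α₀ > 0. Fix α with 0 < α < α₀. Then for every t > 0: ∫₀^∞ sin(ts) e^{αs} k(s) ds ≥ ((α₀ − α)/t)·∫₀^∞ (1 − cos(ts)) k(s) e^{αs} ds, and moreover ∫₀^∞ sin(ts) e^{αs} k(s) ds > 0. -/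
/-!
Put `F s = (1 - cos (t s)) e^{α s}`, so that `F 0 = 0`, `F ≥ 0` and
`F' = t sin (t s) e^{α s} + α F`. Integrating `F k` by parts on `[0, T]`, where `k` is
absolutely continuous, and using `-k' ≥ α₀ k` gives

  `0 ≤ F T * k T ≤ ∫₀ᵀ (F' - α₀ F) k = t ∫₀ᵀ sin (t s) e^{α s} k - (α₀ - α) ∫₀ᵀ F k`;

then one lets `T → ∞`. The same integration by parts with `F = e^{α₀ s}` yields the decay
`k s ≤ k 0 * e^{-α₀ s}` that makes all integrals converge. Strict positivity holds because
`F k > 0` just to the right of `0`.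
-/

open MeasureTheory Set Filter Topology

theorem AbsolutelyContinuousOnInterval.congr {f g : ℝ → ℝ} {a b : ℝ}
    (hf : AbsolutelyContinuousOnInterval f a b) (hfg : EqOn f g (uIcc a b)) :
    AbsolutelyContinuousOnInterval g a b := by
  refine hf.congr' (eventually_inf_principal.mpr (Eventually.of_forall fun E hE => ?_))
  exact Finset.sum_congr rfl fun i hi => by rw [hfg (hE.1 i hi).1, hfg (hE.1 i hi).2]

theorem setIntegral_Ioi_pos_of_eventually_pos {f : ℝ → ℝ} {a : ℝ}
    (hf : IntegrableOn f (Ioi a)) (hf_nonneg : ∀ x ∈ Ioi a, 0 ≤ f x)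
    (hf_pos : ∀ᶠ x in 𝓝[>] a, 0 < f x) :
    0 < ∫ x in Ioi a, f x := by
  rw [setIntegral_pos_iff_support_of_nonneg_ae
    ((ae_restrict_iff' measurableSet_Ioi).mpr (Eventually.of_forall hf_nonneg)) hf]
  obtain ⟨b, hab, hb⟩ := mem_nhdsGT_iff_exists_Ioo_subset.mp hf_pos
  calc (0 : ENNReal) < volume (Ioo a b) := by simpa using hab
    _ ≤ volume (Function.support f ∩ Ioi a) :=
      measure_mono fun x hx => ⟨(hb hx).ne', hx.1⟩

theorem Real.eventually_cos_mul_lt_one {t : ℝ} (ht : 0 < t) :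
    ∀ᶠ s in 𝓝[>] 0, Real.cos (t * s) < 1 := by
  filter_upwards [self_mem_nhdsWithin,
    nhdsWithin_le_nhds (Iio_mem_nhds (div_pos Real.two_pi_pos ht))] with s hs hs'
  have hts : t * s < 2 * Real.pi := by rwa [mem_Iio, lt_div_iff₀ ht, mul_comm] at hs'
  refine (Real.cos_le_one _).lt_of_ne fun h => ?_
  have := (Real.cos_eq_one_iff_of_lt_of_lt (by nlinarith [mem_Ioi.mp hs]) hts).mp h
  nlinarith [mem_Ioi.mp hs]

theorem hasDerivAt_one_sub_cos_mul_mul_exp (t α x : ℝ) :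
    HasDerivAt (fun s => (1 - Real.cos (t * s)) * Real.exp (α * s))
      ((t * Real.sin (t * x) + α * (1 - Real.cos (t * x))) * Real.exp (α * x)) x := by
  have hcos := (((hasDerivAt_id x).const_mul t).cos).const_sub 1
  have hexp := ((hasDerivAt_id x).const_mul α).exp
  refine (hcos.mul hexp).congr_deriv ?_
  simp only [id]
  ring

structure IsIndefiniteIntegralOnIci (k k' : ℝ → ℝ) : Prop where
  intervalIntegrable : ∀ s, 0 ≤ s → IntervalIntegrable k' volume 0 s
  eq_add_integral : ∀ s, 0 ≤ s → k s = k 0 + ∫ u in (0 : ℝ)..s, k' u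

namespace IsIndefiniteIntegralOnIci

variable {k k' : ℝ → ℝ}

theorem absolutelyContinuousOnInterval (hk : IsIndefiniteIntegralOnIci k k') {T : ℝ}
    (hT : 0 ≤ T) : AbsolutelyContinuousOnInterval k 0 T := by
  refine ((contDiffOn_const (c := k 0)).absolutelyContinuousOnInterval.add
    ((hk.intervalIntegrable T hT).absolutelyContinuousOnInterval_intervalIntegral
      left_mem_uIcc)).congr fun s hs => ?_
  rw [uIcc_of_le hT] at hs
  exact (hk.eq_add_integral s hs.1).symm

theorem continuousOn (hk : IsIndefiniteIntegralOnIci k k') : ContinuousOn k (Ici 0) := by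
  intro x hx
  have hx1 : (0 : ℝ) ≤ x + 1 := by linarith [mem_Ici.mp hx]
  have hIcc := (hk.absolutelyContinuousOnInterval hx1).continuousOn
  rw [uIcc_of_le hx1] at hIcc
  exact (hIcc x ⟨hx, by linarith⟩).mono_of_mem_nhdsWithin
    (inter_mem_nhdsWithin _ (Iic_mem_nhds (lt_add_one x)))

theorem eventually_pos (hk : IsIndefiniteIntegralOnIci k k') (hk0 : 0 < k 0) :
    ∀ᶠ s in 𝓝[>] 0, 0 < k s :=
  ((hk.continuousOn 0 self_mem_Ici).mono_left (nhdsWithin_mono _ Ioi_subset_Ici_self))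
    (Ioi_mem_nhds hk0)

theorem ae_hasDerivAt (hk : IsIndefiniteIntegralOnIci k k') :
    ∀ᵐ x, 0 < x → HasDerivAt k (k' x) x := by
  have h : ∀ n : ℕ, ∀ᵐ x, x ∈ Ioo (0 : ℝ) n → HasDerivAt k (k' x) x := by
    intro n
    filter_upwards [(hk.intervalIntegrable n n.cast_nonneg).ae_hasDerivAt_integral] with x hx hxn
    have hprim :=
      (hx (Ioo_subset_Icc_self.trans Icc_subset_uIcc hxn) 0 left_mem_uIcc).const_add (k 0)
    refine hprim.congr_of_eventuallyEq ?_
    filter_upwards [Ioi_mem_nhds hxn.1] with y hy using hk.eq_add_integral y (le_of_lt hy)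
  filter_upwards [ae_all_iff.mpr h] with x hx hx0
  obtain ⟨n, hn⟩ := exists_nat_gt x
  exact hx n ⟨hx0, hn⟩

theorem integral_deriv_mul_add_mul_deriv (hk : IsIndefiniteIntegralOnIci k k') {F F' : ℝ → ℝ}
    (hF : ∀ x, HasDerivAt F (F' x) x) (hF' : Continuous F') {T : ℝ} (hT : 0 ≤ T) :
    ∫ x in (0 : ℝ)..T, F' x * k x + F x * k' x = F T * k T - F 0 * k 0 := by
  have hderiv : deriv F = F' := funext fun x => (hF x).deriv
  have hFC1 : ContDiff ℝ 1 F :=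
    contDiff_one_iff_deriv.mpr ⟨fun x => (hF x).differentiableAt, hderiv ▸ hF'⟩
  rw [← hFC1.contDiffOn.absolutelyContinuousOnInterval.integral_deriv_mul_eq_sub
    (hk.absolutelyContinuousOnInterval hT)]
  refine intervalIntegral.integral_congr_ae ?_
  filter_upwards [hk.ae_hasDerivAt] with x hx hxT
  rw [uIoc_of_le hT] at hxT
  rw [hderiv, (hx hxT.1).deriv]

variable {α₀ : ℝ}

theorem le_integral_sub_mul (hk : IsIndefiniteIntegralOnIci k k')
    (hk' : ∀ᵐ s, 0 ≤ s → k' s ≤ -α₀ * k s) {F F' : ℝ → ℝ}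
    (hF : ∀ x, HasDerivAt F (F' x) x) (hF' : Continuous F') (hF₀ : ∀ x, 0 ≤ F x)
    {T : ℝ} (hT : 0 ≤ T) :
    F T * k T - F 0 * k 0 ≤ ∫ x in (0 : ℝ)..T, (F' x - α₀ * F x) * k x := by
  have hF_cont : Continuous F := continuous_iff_continuousAt.mpr fun x => (hF x).continuousAt
  have hk_cont : ContinuousOn k (uIcc 0 T) :=
    (hk.absolutelyContinuousOnInterval hT).continuousOn
  rw [← hk.integral_deriv_mul_add_mul_deriv hF hF' hT]
  refine intervalIntegral.integral_mono_ae_restrict hT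
    ((hF'.continuousOn.mul hk_cont).intervalIntegrable.add
      ((hk.intervalIntegrable T hT).continuousOn_mul hF_cont.continuousOn))
    (((hF'.sub (continuous_const.mul hF_cont)).continuousOn.mul hk_cont).intervalIntegrable) ?_
  rw [EventuallyLE, ae_restrict_iff' measurableSet_Icc]
  filter_upwards [hk'] with x hx hxT
  nlinarith [mul_le_mul_of_nonneg_left (hx hxT.1) (hF₀ x)]

theorem le_mul_exp (hk : IsIndefiniteIntegralOnIci k k')
    (hk' : ∀ᵐ s, 0 ≤ s → k' s ≤ -α₀ * k s) {s : ℝ} (hs : 0 ≤ s) :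
    k s ≤ k 0 * Real.exp (-α₀ * s) := by
  have h := hk.le_integral_sub_mul hk' (F := fun x => Real.exp (α₀ * x))
    (F' := fun x => Real.exp (α₀ * x) * α₀)
    (fun x => by simpa using ((hasDerivAt_id x).const_mul α₀).exp) (by fun_prop)
    (fun x => (Real.exp_pos _).le) hs
  simp only [mul_comm _ α₀, sub_self, zero_mul, intervalIntegral.integral_zero, mul_zero,
    Real.exp_zero, one_mul, sub_nonpos] at h
  rw [neg_mul, Real.exp_neg, ← div_eq_mul_inv, le_div_iff₀ (Real.exp_pos _), mul_comm]
  exact h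

theorem integrableOn_mul (hk : IsIndefiniteIntegralOnIci k k')
    (hk_nonneg : ∀ s, 0 ≤ s → 0 ≤ k s) (hk' : ∀ᵐ s, 0 ≤ s → k' s ≤ -α₀ * k s)
    {α : ℝ} (hαα₀ : α < α₀) {φ : ℝ → ℝ} {C : ℝ} (hφ : Continuous φ)
    (hφC : ∀ s, 0 < s → |φ s| ≤ C * Real.exp (α * s)) :
    IntegrableOn (fun s => φ s * k s) (Ioi 0) := by
  refine Integrable.mono' ((exp_neg_integrableOn_Ioi 0 (sub_pos.mpr hαα₀)).const_mul (C * k 0))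
    ((hφ.continuousOn.mul (hk.continuousOn.mono Ioi_subset_Ici_self)).aestronglyMeasurable
      measurableSet_Ioi) ?_
  rw [ae_restrict_iff' measurableSet_Ioi]
  refine Eventually.of_forall fun s hs => ?_
  have hks := hk_nonneg s (le_of_lt hs)
  calc ‖φ s * k s‖ = |φ s| * k s := by rw [Real.norm_eq_abs, abs_mul, abs_of_nonneg hks]
    _ ≤ C * Real.exp (α * s) * (k 0 * Real.exp (-α₀ * s)) :=
      mul_le_mul (hφC s hs) (hk.le_mul_exp hk' (le_of_lt hs)) hks
        ((abs_nonneg _).trans (hφC s hs))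
    _ = C * k 0 * Real.exp (-(α₀ - α) * s) := by
      rw [mul_mul_mul_comm, ← Real.exp_add]; ring_nf

theorem integral_sin_sub_one_sub_cos_nonneg (hk : IsIndefiniteIntegralOnIci k k')
    (hk_nonneg : ∀ s, 0 ≤ s → 0 ≤ k s) (hk' : ∀ᵐ s, 0 ≤ s → k' s ≤ -α₀ * k s)
    (t α : ℝ) {T : ℝ} (hT : 0 ≤ T) :
    0 ≤ ∫ x in (0 : ℝ)..T,
      (t * Real.sin (t * x) - (α₀ - α) * (1 - Real.cos (t * x))) * Real.exp (α * x) * k x := by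
  have h := hk.le_integral_sub_mul hk' (hasDerivAt_one_sub_cos_mul_mul_exp t α) (by fun_prop)
    (fun x => mul_nonneg (sub_nonneg.mpr (Real.cos_le_one _)) (Real.exp_pos _).le) hT
  simp only [mul_zero, Real.cos_zero, sub_self, zero_mul, sub_zero] at h
  calc 0 ≤ (1 - Real.cos (t * T)) * Real.exp (α * T) * k T :=
        mul_nonneg (mul_nonneg (sub_nonneg.mpr (Real.cos_le_one _)) (Real.exp_pos _).le)
          (hk_nonneg T hT)
    _ ≤ _ := h
    _ = _ := intervalIntegral.integral_congr fun x _ => by ring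

theorem integrableOn_sin_mul_exp_mul (hk : IsIndefiniteIntegralOnIci k k')
    (hk_nonneg : ∀ s, 0 ≤ s → 0 ≤ k s) (hk' : ∀ᵐ s, 0 ≤ s → k' s ≤ -α₀ * k s)
    {α : ℝ} (hαα₀ : α < α₀) (t : ℝ) :
    IntegrableOn (fun s => Real.sin (t * s) * Real.exp (α * s) * k s) (Ioi 0) :=
  hk.integrableOn_mul hk_nonneg hk' hαα₀ (C := 1) (by fun_prop) fun s _ => by
    rw [abs_mul, Real.abs_exp, one_mul]
    exact mul_le_of_le_one_left (Real.exp_pos _).le (Real.abs_sin_le_one _)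

theorem integrableOn_one_sub_cos_mul_mul_exp (hk : IsIndefiniteIntegralOnIci k k')
    (hk_nonneg : ∀ s, 0 ≤ s → 0 ≤ k s) (hk' : ∀ᵐ s, 0 ≤ s → k' s ≤ -α₀ * k s)
    {α : ℝ} (hαα₀ : α < α₀) (t : ℝ) :
    IntegrableOn (fun s => (1 - Real.cos (t * s)) * k s * Real.exp (α * s)) (Ioi 0) := by
  refine (hk.integrableOn_mul hk_nonneg hk' hαα₀ (C := 2) (by fun_prop) fun s _ => ?_
    ).congr_fun (fun s _ => mul_right_comm _ _ _) measurableSet_Ioi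
  rw [abs_mul, Real.abs_exp, abs_of_nonneg (sub_nonneg.mpr (Real.cos_le_one _))]
  exact mul_le_mul_of_nonneg_right (by linarith [Real.neg_one_le_cos (t * s)])
    (Real.exp_pos _).le

theorem integral_one_sub_cos_mul_mul_exp_pos (hk : IsIndefiniteIntegralOnIci k k')
    (hk_nonneg : ∀ s, 0 ≤ s → 0 ≤ k s) (hk' : ∀ᵐ s, 0 ≤ s → k' s ≤ -α₀ * k s)
    (hk0 : 0 < k 0) {α : ℝ} (hαα₀ : α < α₀) {t : ℝ} (ht : 0 < t) :
    0 < ∫ s in Ioi 0, (1 - Real.cos (t * s)) * k s * Real.exp (α * s) := by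
  refine setIntegral_Ioi_pos_of_eventually_pos
    (hk.integrableOn_one_sub_cos_mul_mul_exp hk_nonneg hk' hαα₀ t) (fun s hs => ?_) ?_
  · exact mul_nonneg
      (mul_nonneg (sub_nonneg.mpr (Real.cos_le_one _)) (hk_nonneg s (le_of_lt hs)))
      (Real.exp_pos _).le
  · filter_upwards [Real.eventually_cos_mul_lt_one ht, hk.eventually_pos hk0] with s hcos hks
    exact mul_pos (mul_pos (sub_pos.mpr hcos) hks) (Real.exp_pos _)

theorem mul_integral_one_sub_cos_mul_mul_exp_le (hk : IsIndefiniteIntegralOnIci k k')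
    (hk_nonneg : ∀ s, 0 ≤ s → 0 ≤ k s) (hk' : ∀ᵐ s, 0 ≤ s → k' s ≤ -α₀ * k s)
    {α : ℝ} (hαα₀ : α < α₀) (t : ℝ) :
    (α₀ - α) * ∫ s in Ioi 0, (1 - Real.cos (t * s)) * k s * Real.exp (α * s) ≤
      t * ∫ s in Ioi 0, Real.sin (t * s) * Real.exp (α * s) * k s := by
  have hI := (hk.integrableOn_sin_mul_exp_mul hk_nonneg hk' hαα₀ t).const_mul t
  have hJ := (hk.integrableOn_one_sub_cos_mul_mul_exp hk_nonneg hk' hαα₀ t).const_mul (α₀ - α)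
  rw [← sub_nonneg, ← integral_const_mul, ← integral_const_mul, ← integral_sub hI hJ]
  refine ge_of_tendsto (intervalIntegral_tendsto_integral_Ioi 0 (hI.sub hJ) tendsto_id) ?_
  filter_upwards [eventually_ge_atTop 0] with T hT
  exact (hk.integral_sin_sub_one_sub_cos_nonneg hk_nonneg hk' t α hT).trans_eq
    (intervalIntegral.integral_congr fun x _ => by ring)

end IsIndefiniteIntegralOnIci

theorem stmt_14_general
    (k k' : ℝ → ℝ) (α₀ : ℝ)
    (hk_nonneg : ∀ s : ℝ, 0 ≤ s → 0 ≤ k s)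
    (hk'_int : ∀ s : ℝ, 0 ≤ s → IntervalIntegrable k' volume 0 s)
    (hk_ac : ∀ s : ℝ, 0 ≤ s → k s = k 0 + ∫ u in (0 : ℝ)..s, k' u)
    (hk0 : 0 < k 0)
    (hk' : ∀ᵐ s : ℝ, 0 ≤ s → k' s ≤ -α₀ * k s)
    (α : ℝ) (hαα₀ : α < α₀) :
    ∀ t : ℝ, 0 < t →
      ((α₀ - α) / t) * (∫ s in Set.Ioi (0 : ℝ),
          (1 - Real.cos (t * s)) * k s * Real.exp (α * s)) ≤
        (∫ s in Set.Ioi (0 : ℝ), Real.sin (t * s) * Real.exp (α * s) * k s) ∧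
      0 < ∫ s in Set.Ioi (0 : ℝ), Real.sin (t * s) * Real.exp (α * s) * k s := by
  intro t ht
  have hk : IsIndefiniteIntegralOnIci k k' := ⟨hk'_int, hk_ac⟩
  have hJ_pos := hk.integral_one_sub_cos_mul_mul_exp_pos hk_nonneg hk' hk0 hαα₀ ht
  have hkey := hk.mul_integral_one_sub_cos_mul_mul_exp_le hk_nonneg hk' hαα₀ t
  refine ⟨?_, ?_⟩
  · rw [div_mul_eq_mul_div, div_le_iff₀ ht]
    linarith
  · nlinarith [mul_pos (sub_pos.mpr hαα₀) hJ_pos]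

/-- positivity claim `Φ(t) > 0` in the proof of the Lemma in
Section 4 of the paper.  Under the standing assumptions on the kernel `k` and
`0 < α < α₀`, for every `t > 0`:
`∫₀^∞ sin(ts) e^{αs} k(s) ds ≥ ((α₀−α)/t) ∫₀^∞ (1 − cos(ts)) k(s) e^{αs} ds`, and
`∫₀^∞ sin(ts) e^{αs} k(s) ds > 0`. -/
theorem stmt_14
    (k k' : ℝ → ℝ) (α₀ : ℝ) (hα₀ : 0 < α₀)
    (hk_nonneg : ∀ s : ℝ, 0 ≤ s → 0 ≤ k s)
    (hk'_int : ∀ s : ℝ, 0 ≤ s → IntervalIntegrable k' volume 0 s)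
    (hk_ac : ∀ s : ℝ, 0 ≤ s → k s = k 0 + ∫ u in (0 : ℝ)..s, k' u)
    (hk0 : 0 < k 0)
    (hk_int1 : ∫ s in Set.Ioi (0 : ℝ), k s < 1)
    (hk' : ∀ᵐ s : ℝ, 0 ≤ s → k' s ≤ -α₀ * k s)
    (α : ℝ) (hα : 0 < α) (hαα₀ : α < α₀) :
    ∀ t : ℝ, 0 < t →
      ((α₀ - α) / t) * (∫ s in Set.Ioi (0 : ℝ),
          (1 - Real.cos (t * s)) * k s * Real.exp (α * s)) ≤
        (∫ s in Set.Ioi (0 : ℝ), Real.sin (t * s) * Real.exp (α * s) * k s) ∧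
      0 < ∫ s in Set.Ioi (0 : ℝ), Real.sin (t * s) * Real.exp (α * s) * k s :=
  stmt_14_general k k' α₀ hk_nonneg hk'_int hk_ac hk0 hk' α hαα₀
end

section
/- Let k : ℝ → ℝ satisfy: k(s) ≥ 0 for s ≥ 0, k is locally absolutely continuous on [0,∞) with a.e. derivative k', k(0) > 0, ∫₀^∞ k(s) ds < 1, and k'(s) ≤ −α₀ k(s) for a.e. s ≥ 0, for some α₀ > 0. Fix α with 0 < α < α₀. Then liminf_{t→∞} ((1+t²)/t)·∫₀^∞ sin(ts) e^{αs} k(s) ds ≥ (α₀ − α)·∫₀^∞ e^{αs} k(s) ds. -/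
/-! The weights `φ_c(s) = (1 + c cos ts) e^{αs}` with `|c| ≤ 1` are nonnegative, so integrating
`φ_c k'` by parts and using `k' ≤ -α₀ k` gives
`(α₀ - α) ∫ (1 + c cos ts) e^{αs} k + c t ∫ sin(ts) e^{αs} k ≤ (1 + c) k(0)`.
For `c = -1` this bounds `t ∫ sin(ts) e^{αs} k` from below by `(α₀ - α) ∫ (1 - cos ts) e^{αs} k`,
which tends to `(α₀ - α) ∫ e^{αs} k` by the Riemann–Lebesgue lemma; for `c = 1` it bounds it from
above by `2 k(0)`, which keeps the liminf finite. As `t ∫ sin(ts) e^{αs} k ≥ 0`, the factor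
`(1 + t²)/t = (1 + t⁻²) t` keeps the lower bound and at most doubles the upper one for `t ≥ 1`.
The weight `e^{α₀ s}` gives `k(s) ≤ k(0) e^{-α₀ s}`, so that all the integrals over `(0, ∞)`
converge. -/

open MeasureTheory Set Filter Topology Interval

section Primitive

variable {k k' φ φ' : ℝ → ℝ} {a b : ℝ}

theorem continuousOn_of_eq_add_primitive (hab : a ≤ b) (hk' : IntervalIntegrable k' volume a b)
    (hk : ∀ x ∈ Icc a b, k x = k a + ∫ u in a..x, k' u) : ContinuousOn k (Icc a b) := by
  rw [← uIcc_of_le hab] at hk ⊢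
  exact (continuousOn_const.add
    (intervalIntegral.continuousOn_primitive_interval' hk' left_mem_uIcc)).congr hk

theorem integral_mul_eq_sub_of_eq_add_primitive (hab : a ≤ b)
    (hk' : IntervalIntegrable k' volume a b) (hk : ∀ x ∈ Icc a b, k x = k a + ∫ u in a..x, k' u)
    (hφ : ∀ x, HasDerivAt φ (φ' x) x) (hφ' : Continuous φ') :
    ∫ x in a..b, φ x * k' x = φ b * k b - φ a * k a - ∫ x in a..b, φ' x * k x := by
  rw [← uIcc_of_le hab] at hk
  set K : ℝ → ℝ := fun x => k a + ∫ u in a..x, k' u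
  have hK : AbsolutelyContinuousOnInterval K a b :=
    (LipschitzWith.const (k a)).lipschitzOnWith.absolutelyContinuousOnInterval.fun_add
      (hk'.absolutelyContinuousOnInterval_intervalIntegral left_mem_uIcc)
  have hderiv_φ : deriv φ = φ' := funext fun x => (hφ x).deriv
  have hΦ : AbsolutelyContinuousOnInterval φ a b :=
    (contDiff_one_iff_deriv.2 ⟨fun x => (hφ x).differentiableAt, hderiv_φ ▸ hφ'⟩).contDiffOn
      |>.absolutelyContinuousOnInterval
  have hderiv_K : ∀ᵐ x, x ∈ Ι a b → φ x * deriv K x = φ x * k' x := by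
    filter_upwards [hk'.ae_hasDerivAt_integral] with x hx hxab
    rw [((hx (uIoc_subset_uIcc hxab) a left_mem_uIcc).const_add (k a)).deriv]
  have hibp := hΦ.integral_mul_deriv_eq_deriv_mul hK
  rw [intervalIntegral.integral_congr_ae hderiv_K, hderiv_φ,
    intervalIntegral.integral_congr fun x hx => congrArg (φ' x * ·) (hk x hx).symm] at hibp
  rwa [show K a = k a from (hk a left_mem_uIcc).symm,
    show K b = k b from (hk b right_mem_uIcc).symm] at hibp

theorem mul_add_integral_sub_deriv_mul_le {r : ℝ} (hab : a ≤ b)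
    (hk' : IntervalIntegrable k' volume a b) (hk : ∀ x ∈ Icc a b, k x = k a + ∫ u in a..x, k' u)
    (hk'_le : ∀ᵐ x, x ∈ Icc a b → k' x ≤ -r * k x)
    (hφ : ∀ x, HasDerivAt φ (φ' x) x) (hφ' : Continuous φ') (hφ_nonneg : ∀ x ∈ Icc a b, 0 ≤ φ x) :
    φ b * k b + ∫ x in a..b, (r * φ x - φ' x) * k x ≤ φ a * k a := by
  have hkc : ContinuousOn k [[a, b]] :=
    uIcc_of_le hab ▸ continuousOn_of_eq_add_primitive hab hk' hk
  have hφc : Continuous φ := continuous_iff_continuousAt.2 fun x => (hφ x).continuousAt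
  have hφk : IntervalIntegrable (fun x => φ x * k x) volume a b :=
    (hφc.continuousOn.mul hkc).intervalIntegrable
  have hφ'k : IntervalIntegrable (fun x => φ' x * k x) volume a b :=
    (hφ'.continuousOn.mul hkc).intervalIntegrable
  have hmono : ∫ x in a..b, φ x * k' x ≤ ∫ x in a..b, -r * (φ x * k x) := by
    refine intervalIntegral.integral_mono_ae_restrict hab (hk'.continuousOn_mul hφc.continuousOn)
      (hφk.const_mul _) ?_
    filter_upwards [ae_restrict_mem measurableSet_Icc, ae_restrict_of_ae hk'_le] with x hx hx'
    calc φ x * k' x ≤ φ x * (-r * k x) := mul_le_mul_of_nonneg_left (hx' hx) (hφ_nonneg x hx)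
      _ = -r * (φ x * k x) := by ring
  have hsplit : ∫ x in a..b, (r * φ x - φ' x) * k x
      = r * (∫ x in a..b, φ x * k x) - ∫ x in a..b, φ' x * k x := by
    simp_rw [sub_mul, mul_assoc]
    rw [intervalIntegral.integral_sub (hφk.const_mul r) hφ'k, intervalIntegral.integral_const_mul]
  rw [integral_mul_eq_sub_of_eq_add_primitive hab hk' hk hφ hφ',
    intervalIntegral.integral_const_mul] at hmono
  linarith

end Primitive

theorem tendsto_integral_cos_mul_atTop {g : ℝ → ℝ} (hg : Integrable g) :
    Tendsto (fun t => ∫ s, Real.cos (t * s) * g s) atTop (𝓝 0) := by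
  have hscale : Tendsto (fun t : ℝ => t / (2 * Real.pi)) atTop (cocompact ℝ) :=
    (tendsto_id.atTop_div_const Real.two_pi_pos).mono_right atTop_le_cocompact
  have hRL := (Complex.continuous_re.tendsto 0).comp
    ((Real.tendsto_integral_exp_smul_cocompact fun s => (g s : ℂ)).comp hscale)
  rw [Complex.zero_re] at hRL
  refine hRL.congr fun t => ?_
  rw [Function.comp_apply, Function.comp_apply, ← RCLike.re_to_complex, ← integral_re]
  · congr 1 with s
    rw [Circle.smul_def, Real.fourierChar_apply, smul_eq_mul, RCLike.re_to_complex,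
      Complex.re_mul_ofReal, show 2 * Real.pi * -(s * (t / (2 * Real.pi))) = -(t * s) by
        field_simp, Complex.exp_ofReal_mul_I_re, Real.cos_neg]
  · simpa [mul_comm] using (Real.fourierIntegral_convergent_iff (t / (2 * Real.pi))).2 hg.ofReal

theorem tendsto_setIntegral_cos_mul_atTop {g : ℝ → ℝ} {S : Set ℝ} (hS : MeasurableSet S)
    (hg : IntegrableOn g S) : Tendsto (fun t => ∫ s in S, Real.cos (t * s) * g s) atTop (𝓝 0) := by
  simpa only [← integral_indicator hS, indicator_mul_right] using
    tendsto_integral_cos_mul_atTop ((integrable_indicator_iff hS).2 hg)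

theorem le_liminf_one_add_sq_div_mul {u v : ℝ → ℝ} {L M : ℝ} (hv : Tendsto v atTop (𝓝 L))
    (hv_nonneg : ∀ᶠ t in atTop, 0 ≤ v t) (hvu : ∀ᶠ t in atTop, v t ≤ t * u t)
    (huM : ∀ᶠ t in atTop, t * u t ≤ M) :
    L ≤ liminf (fun t => (1 + t ^ 2) / t * u t) atTop := by
  have hbounds : ∀ᶠ t in atTop, v t ≤ (1 + t ^ 2) / t * u t ∧ (1 + t ^ 2) / t * u t ≤ 2 * M := by
    filter_upwards [eventually_ge_atTop 1, hv_nonneg, hvu, huM] with t ht hv0 hvu huM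
    have hrw : (1 + t ^ 2) / t * u t = (1 + t ^ 2) / t ^ 2 * (t * u t) := by
      field_simp
    have hlo : 1 ≤ (1 + t ^ 2) / t ^ 2 := by rw [le_div_iff₀ (by positivity)]; linarith
    have hhi : (1 + t ^ 2) / t ^ 2 ≤ 2 := by rw [div_le_iff₀ (by positivity)]; nlinarith
    rw [hrw]
    constructor <;> nlinarith
  calc L = liminf v atTop := hv.liminf_eq.symm
    _ ≤ _ := liminf_le_liminf (hbounds.mono fun _ h => h.1) hv.isBoundedUnder_ge
      (isBoundedUnder_of_eventually_le (hbounds.mono fun _ h => h.2)).isCoboundedUnder_ge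

theorem abs_mul_cos_le_one {c : ℝ} (hc : |c| ≤ 1) (x : ℝ) : |c * Real.cos x| ≤ 1 := by
  rw [abs_mul]
  exact mul_le_one₀ hc (abs_nonneg _) (Real.abs_cos_le_one x)

structure IsDecayingKernel (k k' : ℝ → ℝ) (α₀ : ℝ) : Prop where
  nonneg : ∀ s, 0 ≤ s → 0 ≤ k s
  intervalIntegrable : ∀ s, 0 ≤ s → IntervalIntegrable k' volume 0 s
  eq_add_integral : ∀ s, 0 ≤ s → k s = k 0 + ∫ u in (0 : ℝ)..s, k' u
  deriv_le : ∀ᵐ s, 0 ≤ s → k' s ≤ -α₀ * k s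

namespace IsDecayingKernel

variable {k k' φ φ' : ℝ → ℝ} {α₀ α : ℝ}

theorem mul_add_integral_sub_deriv_mul_le (hk : IsDecayingKernel k k' α₀)
    (hφ : ∀ x, HasDerivAt φ (φ' x) x) (hφ' : Continuous φ') (hφ_nonneg : ∀ x, 0 ≤ x → 0 ≤ φ x)
    {b : ℝ} (hb : 0 ≤ b) :
    φ b * k b + ∫ x in (0 : ℝ)..b, (α₀ * φ x - φ' x) * k x ≤ φ 0 * k 0 :=
  _root_.mul_add_integral_sub_deriv_mul_le hb (hk.intervalIntegrable b hb)
    (fun x hx => hk.eq_add_integral x hx.1) (hk.deriv_le.mono fun _ hx hx' => hx hx'.1) hφ hφ'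
    fun x hx => hφ_nonneg x hx.1

theorem continuousOn_Ioi (hk : IsDecayingKernel k k' α₀) : ContinuousOn k (Ioi 0) := by
  intro x hx
  have hx1 : 0 ≤ x + 1 := by linarith [mem_Ioi.1 hx]
  exact ((continuousOn_of_eq_add_primitive hx1 (hk.intervalIntegrable _ hx1)
    fun y hy => hk.eq_add_integral y hy.1).continuousAt
      (Icc_mem_nhds hx (lt_add_one x))).continuousWithinAt

theorem le_mul_exp_neg (hk : IsDecayingKernel k k' α₀) {s : ℝ} (hs : 0 ≤ s) :
    k s ≤ k 0 * Real.exp (-(α₀ * s)) := by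
  have h := hk.mul_add_integral_sub_deriv_mul_le (φ := fun x => Real.exp (α₀ * x))
    (φ' := fun x => α₀ * Real.exp (α₀ * x))
    (fun x => ((hasDerivAt_id' x).const_mul α₀).exp.congr_deriv (by ring)) (by fun_prop)
    (fun x _ => (Real.exp_pos _).le) hs
  simp only [sub_self, zero_mul, intervalIntegral.integral_zero, add_zero, mul_zero,
    Real.exp_zero, one_mul] at h
  rw [Real.exp_neg, ← div_eq_mul_inv, le_div_iff₀ (Real.exp_pos _), mul_comm]
  exact h

theorem integrableOn_exp_mul (hk : IsDecayingKernel k k' α₀) (hα : α < α₀) :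
    IntegrableOn (fun s => Real.exp (α * s) * k s) (Ioi 0) := by
  refine Integrable.mono' ((exp_neg_integrableOn_Ioi 0 (sub_pos.2 hα)).const_mul (k 0))
    ((by fun_prop : Continuous fun s => Real.exp (α * s)).continuousOn.mul
      hk.continuousOn_Ioi |>.aestronglyMeasurable measurableSet_Ioi) ?_
  filter_upwards [ae_restrict_mem measurableSet_Ioi] with s hs
  have hs : 0 ≤ s := le_of_lt hs
  rw [Real.norm_of_nonneg (mul_nonneg (Real.exp_pos _).le (hk.nonneg s hs))]
  calc Real.exp (α * s) * k s ≤ Real.exp (α * s) * (k 0 * Real.exp (-(α₀ * s))) :=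
        mul_le_mul_of_nonneg_left (hk.le_mul_exp_neg hs) (Real.exp_pos _).le
    _ = k 0 * Real.exp (-(α₀ - α) * s) := by
        rw [mul_left_comm, ← Real.exp_add]; ring_nf

theorem setIntegral_sub_deriv_mul_le (hk : IsDecayingKernel k k' α₀)
    (hφ : ∀ x, HasDerivAt φ (φ' x) x) (hφ' : Continuous φ') (hφ_nonneg : ∀ x, 0 ≤ x → 0 ≤ φ x)
    (hint : IntegrableOn (fun x => (α₀ * φ x - φ' x) * k x) (Ioi 0)) :
    ∫ x in Ioi 0, (α₀ * φ x - φ' x) * k x ≤ φ 0 * k 0 := by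
  refine le_of_tendsto (intervalIntegral_tendsto_integral_Ioi 0 hint tendsto_id) ?_
  filter_upwards [eventually_ge_atTop 0] with b hb
  rw [id]
  linarith [hk.mul_add_integral_sub_deriv_mul_le hφ hφ' hφ_nonneg hb,
    mul_nonneg (hφ_nonneg b hb) (hk.nonneg b hb)]

theorem sub_mul_integral_add_mul_integral_sin_le (hk : IsDecayingKernel k k' α₀) (hα : α < α₀)
    {c : ℝ} (hc : |c| ≤ 1) (t : ℝ) :
    (α₀ - α) * (∫ s in Ioi 0, (1 + c * Real.cos (t * s)) * Real.exp (α * s) * k s) +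
      c * t * (∫ s in Ioi 0, Real.sin (t * s) * Real.exp (α * s) * k s) ≤ (1 + c) * k 0 := by
  have hbdd : ∀ w : ℝ → ℝ, Continuous w → (∀ s, ‖w s‖ ≤ 2) →
      IntegrableOn (fun s => w s * Real.exp (α * s) * k s) (Ioi 0) := fun w hw hw2 => by
    simp only [mul_assoc]
    exact (hk.integrableOn_exp_mul hα).bdd_mul hw.aestronglyMeasurable (ae_of_all _ hw2)
  have hw (x : ℝ) : 0 ≤ 1 + c * Real.cos (t * x) ∧ 1 + c * Real.cos (t * x) ≤ 2 := by
    have := abs_le.1 (abs_mul_cos_le_one hc (t * x))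
    constructor <;> linarith
  have hcos := hbdd (fun s => 1 + c * Real.cos (t * s)) (by fun_prop) fun s =>
    abs_le.2 ⟨by linarith [hw s], (hw s).2⟩
  have hsin := hbdd (fun s => Real.sin (t * s)) (by fun_prop) fun s =>
    (Real.abs_sin_le_one _).trans one_le_two
  have hsplit : ∀ s, (α₀ * ((1 + c * Real.cos (t * s)) * Real.exp (α * s)) -
      (α * (1 + c * Real.cos (t * s)) - c * t * Real.sin (t * s)) * Real.exp (α * s)) * k s =
      (α₀ - α) * ((1 + c * Real.cos (t * s)) * Real.exp (α * s) * k s) +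
        c * t * (Real.sin (t * s) * Real.exp (α * s) * k s) := fun s => by ring
  have h := hk.setIntegral_sub_deriv_mul_le
    (φ := fun s => (1 + c * Real.cos (t * s)) * Real.exp (α * s))
    (φ' := fun s => (α * (1 + c * Real.cos (t * s)) - c * t * Real.sin (t * s)) *
      Real.exp (α * s))
    (fun x => (((((hasDerivAt_id' x).const_mul t).cos.const_mul c).const_add 1).fun_mul
      ((hasDerivAt_id' x).const_mul α).exp).congr_deriv (by ring))
    (by fun_prop) (fun x _ => mul_nonneg (hw x).1 (Real.exp_pos _).le)
    (by simp only [hsplit]; exact (hcos.const_mul (α₀ - α)).add (hsin.const_mul (c * t)))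
  simp only [hsplit, mul_zero, Real.cos_zero, Real.exp_zero, mul_one] at h
  rwa [integral_add (hcos.const_mul _) (hsin.const_mul _), integral_const_mul,
    integral_const_mul] at h

theorem integral_mul_exp_mul_nonneg (hk : IsDecayingKernel k k' α₀) {w : ℝ → ℝ}
    (hw : ∀ s, 0 ≤ w s) : 0 ≤ ∫ s in Ioi 0, w s * Real.exp (α * s) * k s :=
  setIntegral_nonneg measurableSet_Ioi fun s hs =>
    mul_nonneg (mul_nonneg (hw s) (Real.exp_pos _).le) (hk.nonneg s (le_of_lt hs))

theorem tendsto_integral_one_sub_cos_mul (hk : IsDecayingKernel k k' α₀) (hα : α < α₀) :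
    Tendsto (fun t => ∫ s in Ioi 0, (1 - Real.cos (t * s)) * Real.exp (α * s) * k s) atTop
      (𝓝 (∫ s in Ioi 0, Real.exp (α * s) * k s)) := by
  have hg := hk.integrableOn_exp_mul hα
  have hcos (t : ℝ) :
      IntegrableOn (fun s => Real.cos (t * s) * (Real.exp (α * s) * k s)) (Ioi 0) :=
    hg.bdd_mul (by fun_prop : Continuous fun s => Real.cos (t * s)).aestronglyMeasurable
      (ae_of_all _ fun s => Real.abs_cos_le_one _)
  simpa using ((tendsto_setIntegral_cos_mul_atTop measurableSet_Ioi hg).const_sub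
    (∫ s in Ioi 0, Real.exp (α * s) * k s)).congr fun t => by
      rw [← integral_sub hg (hcos t)]
      congr with s
      ring

end IsDecayingKernel

theorem stmt_15_general
    (k k' : ℝ → ℝ) (α₀ : ℝ)
    (hk_nonneg : ∀ s : ℝ, 0 ≤ s → 0 ≤ k s)
    (hk'_int : ∀ s : ℝ, 0 ≤ s → IntervalIntegrable k' volume 0 s)
    (hk_ac : ∀ s : ℝ, 0 ≤ s → k s = k 0 + ∫ u in (0 : ℝ)..s, k' u)
    (hk' : ∀ᵐ s : ℝ, 0 ≤ s → k' s ≤ -α₀ * k s)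
    (α : ℝ) (hαα₀ : α < α₀) :
    (α₀ - α) * (∫ s in Set.Ioi (0 : ℝ), Real.exp (α * s) * k s) ≤
      Filter.liminf (fun t : ℝ => ((1 + t ^ 2) / t) *
        ∫ s in Set.Ioi (0 : ℝ), Real.sin (t * s) * Real.exp (α * s) * k s)
        Filter.atTop := by
  have hk : IsDecayingKernel k k' α₀ := ⟨hk_nonneg, hk'_int, hk_ac, hk'⟩
  have hαα₀' : 0 ≤ α₀ - α := sub_nonneg.2 hαα₀.le
  refine le_liminf_one_add_sq_div_mul (M := 2 * k 0)
    ((hk.tendsto_integral_one_sub_cos_mul hαα₀).const_mul (α₀ - α))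
    (.of_forall fun t => mul_nonneg hαα₀' (hk.integral_mul_exp_mul_nonneg fun s => by
      linarith [Real.cos_le_one (t * s)]))
    (.of_forall fun t => ?_) (.of_forall fun t => ?_)
  · have h := hk.sub_mul_integral_add_mul_integral_sin_le hαα₀ (c := -1) (by norm_num) t
    simp only [neg_one_mul, ← sub_eq_add_neg] at h
    linarith
  · have h := hk.sub_mul_integral_add_mul_integral_sin_le hαα₀ (c := 1) (by norm_num) t
    simp only [one_mul] at h
    have h1 : 0 ≤ ∫ s in Ioi 0, (1 + Real.cos (t * s)) * Real.exp (α * s) * k s :=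
      hk.integral_mul_exp_mul_nonneg fun s => by linarith [Real.neg_one_le_cos (t * s)]
    linarith [mul_nonneg hαα₀' h1]

/-- the liminf claim for `Φ` in the proof of the Lemma in Section 4
of the paper.  Under the standing assumptions on the kernel `k` and `0 < α < α₀`:
`liminf_{t→∞} ((1+t²)/t) ∫₀^∞ sin(ts) e^{αs} k(s) ds ≥ (α₀ − α) ∫₀^∞ e^{αs} k(s) ds`. -/
theorem stmt_15
    (k k' : ℝ → ℝ) (α₀ : ℝ) (hα₀ : 0 < α₀)
    (hk_nonneg : ∀ s : ℝ, 0 ≤ s → 0 ≤ k s)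
    (hk'_int : ∀ s : ℝ, 0 ≤ s → IntervalIntegrable k' volume 0 s)
    (hk_ac : ∀ s : ℝ, 0 ≤ s → k s = k 0 + ∫ u in (0 : ℝ)..s, k' u)
    (hk0 : 0 < k 0)
    (hk_int1 : ∫ s in Set.Ioi (0 : ℝ), k s < 1)
    (hk' : ∀ᵐ s : ℝ, 0 ≤ s → k' s ≤ -α₀ * k s)
    (α : ℝ) (hα : 0 < α) (hαα₀ : α < α₀) :
    (α₀ - α) * (∫ s in Set.Ioi (0 : ℝ), Real.exp (α * s) * k s) ≤
      Filter.liminf (fun t : ℝ => ((1 + t ^ 2) / t) *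
        ∫ s in Set.Ioi (0 : ℝ), Real.sin (t * s) * Real.exp (α * s) * k s)
        Filter.atTop :=
  stmt_15_general k k' α₀ hk_nonneg hk'_int hk_ac hk' α hαα₀
end
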